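/- arXiv:2603.13608 — 9 statements merged into one kernel-verified Lean document; each statement's English description precedes it below -/
import Mathlib

section
/- If an n×n block-partitioned real matrix A is robustly block D-stable and α ⊆ {1,…,N} is a nonempty index set, then the block principal submatrix A_{α,α}, formed from the blocks A_{i,j} with i,j ∈ α, is robustly block D-stable with respect to the induced block partition (n_i)_{i∈α}. -/
/-!
Suppose `D (A_αα + B)` has an eigenvalue `w` with `Re w ≥ 0` for a small `B` and a positive
block scaling `D`. Replacing `B` by `B' = B + c D⁻¹` with `c > 0` small moves it to `w + c`,
with `Re (w + c) > 0`. Extend `B'` by zero to a perturbation `B̂` of `A` of no larger norm, and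
let `D₀` carry the weights of `D` on the blocks in `α` and `0` elsewhere. Then `D₀ (A + B̂)` maps
the coordinate subspace of `α` into itself and acts there as `D (A_αα + B')`, so `w + c` is one of
its eigenvalues. But `D₀` is a limit of positive block scalings `D_ε`, for which `D_ε (A + B̂)` is
Hurwitz, and a limit of Hurwitz matrices has its spectrum in the closed left half-plane, since
`|det (w - M)| ≥ (Re w) ^ n` whenever `M` is Hurwitz and `Re w ≥ 0`.
-/

open Matrix

/-- A square real matrix is Hurwitz if every eigenvalue of it, viewed as a complex
matrix, has strictly negative real part. -/
def IsHurwitz {m : Type*} [Fintype m] [DecidableEq m] (M : Matrix m m ℝ) : Prop :=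
  ∀ μ ∈ spectrum ℂ (M.map (algebraMap ℝ ℂ)), μ.re < 0

/-- The operator 2-norm of a square real matrix. -/
noncomputable def opNorm2 {m : Type*} [Fintype m] [DecidableEq m] (M : Matrix m m ℝ) : ℝ :=
  ‖Matrix.toEuclideanCLM (𝕜 := ℝ) M‖

/-- A block-partitioned square real matrix (blocks indexed by `ι`, the `i`-th block of
size `n i`) is block D-stable if `D * A` is Hurwitz for every positive block-diagonal
scaling `D = blkdiag (d 1 • I, …, d N • I)`. -/
def BlockDStable {ι : Type*} [Fintype ι] [DecidableEq ι] {n : ι → ℕ}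
    (A : Matrix ((i : ι) × Fin (n i)) ((i : ι) × Fin (n i)) ℝ) : Prop :=
  ∀ d : ι → ℝ, (∀ i, 0 < d i) →
    IsHurwitz (Matrix.diagonal (fun p => d p.1) * A)

/-- A block-partitioned square real matrix is robustly block D-stable if all
sufficiently small (in operator 2-norm) perturbations of it are block D-stable. -/
def RobustBlockDStable {ι : Type*} [Fintype ι] [DecidableEq ι] {n : ι → ℕ}
    (A : Matrix ((i : ι) × Fin (n i)) ((i : ι) × Fin (n i)) ℝ) : Prop :=
  ∃ μ > 0, ∀ B : Matrix ((i : ι) × Fin (n i)) ((i : ι) × Fin (n i)) ℝ,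
    opNorm2 B ≤ μ → BlockDStable (A + B)

open Filter Topology
open scoped Pointwise Matrix.Norms.L2Operator

theorem Matrix.pow_re_le_norm_det_algebraMap_sub {m : Type*} [Fintype m] [DecidableEq m]
    {M : Matrix m m ℂ} (hM : ∀ μ ∈ spectrum ℂ M, μ.re ≤ 0) {w : ℂ} (hw : 0 ≤ w.re) :
    w.re ^ Fintype.card m ≤ ‖(algebraMap ℂ _ w - M).det‖ := by
  set N := algebraMap ℂ _ w - M
  have hcard : Multiset.card N.charpoly.roots = Fintype.card m := by
    rw [Polynomial.splits_iff_card_roots.mp (IsAlgClosed.splits _), charpoly_natDegree_eq_dim]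
  have hroot : ∀ r ∈ N.charpoly.roots, w.re ≤ ‖r‖ := by
    intro r hr
    have hmem : r ∈ ({w} : Set ℂ) - spectrum ℂ M := by
      rw [spectrum.singleton_sub_eq, mem_spectrum_iff_isRoot_charpoly]
      exact (Polynomial.mem_roots'.mp hr).2
    rw [Set.singleton_sub] at hmem
    obtain ⟨μ, hμ, rfl⟩ := hmem
    calc w.re ≤ (w - μ).re := by simp only [Complex.sub_re]; linarith [hM μ hμ]
      _ ≤ ‖w - μ‖ := Complex.re_le_norm _
  calc w.re ^ Fintype.card m
      = (N.charpoly.roots.map fun _ => w.re).prod := by simp [hcard]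
    _ ≤ (N.charpoly.roots.map (‖·‖)).prod :=
        Multiset.prod_map_le_prod_map₀ _ _ (fun _ _ => hw) hroot
    _ = ‖N.det‖ := by
        rw [det_eq_prod_roots_charpoly]
        exact (map_multiset_prod (normHom : ℂ →*₀ ℝ) _).symm

theorem re_nonpos_of_mem_spectrum_of_tendsto_isHurwitz {m X : Type*} [Fintype m] [DecidableEq m]
    {l : Filter X} [l.NeBot] {M : X → Matrix m m ℝ} {M₀ : Matrix m m ℝ}
    (hM : Tendsto M l (𝓝 M₀)) (hH : ∀ᶠ x in l, IsHurwitz (M x)) :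
    ∀ w ∈ spectrum ℂ (M₀.map (algebraMap ℝ ℂ)), w.re ≤ 0 := by
  intro w hw
  by_contra! hpos
  have hdet : Tendsto (fun x => (algebraMap ℂ _ w - (M x).map (algebraMap ℝ ℂ)).det) l
      (𝓝 (algebraMap ℂ _ w - M₀.map (algebraMap ℝ ℂ)).det) :=
    ((by fun_prop : Continuous fun N : Matrix m m ℝ =>
      (algebraMap ℂ _ w - N.map (algebraMap ℝ ℂ)).det).tendsto M₀).comp hM
  have hzero : (algebraMap ℂ _ w - M₀.map (algebraMap ℝ ℂ)).det = 0 := by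
    rwa [spectrum.mem_iff, isUnit_iff_isUnit_det, isUnit_iff_ne_zero, not_not] at hw
  have hbound : w.re ^ Fintype.card m ≤ ‖(0 : ℂ)‖ := by
    refine ge_of_tendsto (hzero ▸ hdet.norm) (hH.mono fun x hx => ?_)
    exact Matrix.pow_re_le_norm_det_algebraMap_sub (fun μ hμ => (hx μ hμ).le) hpos.le
  rw [norm_zero] at hbound
  exact hbound.not_gt (pow_pos hpos _)

theorem BlockDStable.re_nonpos_of_nonneg {ι : Type*} [Fintype ι] [DecidableEq ι] {n : ι → ℕ}
    {A : Matrix ((i : ι) × Fin (n i)) ((i : ι) × Fin (n i)) ℝ} (hA : BlockDStable A)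
    {d : ι → ℝ} (hd : ∀ i, 0 ≤ d i) :
    ∀ w ∈ spectrum ℂ
      ((diagonal (fun p : (i : ι) × Fin (n i) => d p.1) * A).map (algebraMap ℝ ℂ)), w.re ≤ 0 := by
  refine re_nonpos_of_mem_spectrum_of_tendsto_isHurwitz (l := 𝓝[>] 0)
    (M := fun ε : ℝ => diagonal (fun p : (i : ι) × Fin (n i) => d p.1 + ε) * A) ?_ ?_
  · refine (Continuous.tendsto' (by fun_prop) _ _ (by simp)).mono_left nhdsWithin_le_nhds
  · filter_upwards [self_mem_nhdsWithin] with ε (hε : 0 < ε)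
    exact hA (fun i => d i + ε) fun i => by linarith [hd i]

namespace Matrix

/-! `(1 : Matrix m' m' R).submatrix id f` is the 0/1 matrix of `f : m → m'`, and
`(1 : Matrix m' m' R).submatrix f id` is its transpose. -/

variable {m m' R : Type*} [DecidableEq m'] {f : m → m'}

theorem mul_one_submatrix_id [Fintype m'] [NonAssocSemiring R] {l : Type*} (X : Matrix l m' R) :
    X * (1 : Matrix m' m' R).submatrix id f = X.submatrix id f := by
  ext i a
  simp [mul_apply, one_apply]

theorem one_submatrix_id_mul [Fintype m'] [NonAssocSemiring R] {l : Type*} (X : Matrix m' l R) :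
    (1 : Matrix m' m' R).submatrix f id * X = X.submatrix f id := by
  ext a j
  simp [mul_apply, one_apply]

variable [DecidableEq m]

theorem one_submatrix_mul_one_submatrix_of_injective [Fintype m'] [NonAssocSemiring R]
    (hf : f.Injective) :
    (1 : Matrix m' m' R).submatrix f id * (1 : Matrix m' m' R).submatrix id f = 1 := by
  rw [one_submatrix_id_mul, submatrix_submatrix, Function.id_comp, Function.comp_id,
    submatrix_one f hf]

theorem one_submatrix_mul_diagonal_comp_mul [Fintype m] [NonAssocSemiring R] (hf : f.Injective)
    {u : m' → R} (hu : ∀ i ∉ Set.range f, u i = 0) :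
    (1 : Matrix m' m' R).submatrix id f * diagonal (u ∘ f) * (1 : Matrix m' m' R).submatrix f id
      = diagonal u := by
  ext i j
  by_cases hi : i ∈ Set.range f
  · obtain ⟨a, rfl⟩ := hi
    simp only [mul_apply, submatrix_apply, id, one_apply, hf.eq_iff, diagonal_apply,
      Function.comp_apply, mul_ite, ite_mul, mul_one, one_mul, mul_zero, zero_mul]
    rw [Finset.sum_eq_single a (fun b _ hb => by simp [Ne.symm hb]) (by simp)]
    simp
  · have : ∀ a, f a ≠ i := fun a h => hi ⟨a, h⟩
    simp [mul_apply, one_apply, diagonal_apply, hu i hi, eq_comm (a := i), this]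

variable [Fintype m] [Fintype m']

theorem l2_opNorm_one_submatrix_le {𝕜 : Type*} [RCLike 𝕜] (hf : f.Injective) :
    ‖(1 : Matrix m' m' 𝕜).submatrix id f‖ ≤ 1 := by
  set P := (1 : Matrix m' m' 𝕜).submatrix id f
  have hP : ‖P‖ * ‖P‖ ≤ 1 := by
    rw [← l2_opNorm_conjTranspose_mul_self, conjTranspose_submatrix, conjTranspose_one,
      one_submatrix_mul_one_submatrix_of_injective hf, ← diagonal_one, l2_opNorm_diagonal]
    exact pi_norm_le_iff_of_nonneg zero_le_one |>.mpr fun _ => by simp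
  nlinarith [norm_nonneg P]

theorem l2_opNorm_one_submatrix_mul_mul_le {𝕜 : Type*} [RCLike 𝕜] (hf : f.Injective)
    (Y : Matrix m m 𝕜) :
    ‖(1 : Matrix m' m' 𝕜).submatrix id f * Y * (1 : Matrix m' m' 𝕜).submatrix f id‖ ≤ ‖Y‖ := by
  have hP := l2_opNorm_one_submatrix_le (𝕜 := 𝕜) hf
  have hQ : ‖(1 : Matrix m' m' 𝕜).submatrix f id‖ ≤ 1 := by
    rwa [← l2_opNorm_conjTranspose, conjTranspose_submatrix, conjTranspose_one]
  calc _ ≤ ‖(1 : Matrix m' m' 𝕜).submatrix id f‖ * ‖Y‖ * ‖(1 : Matrix m' m' 𝕜).submatrix f id‖ :=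
        (l2_opNorm_mul _ _).trans (mul_le_mul_of_nonneg_right (l2_opNorm_mul _ _) (norm_nonneg _))
    _ ≤ 1 * ‖Y‖ * 1 := by gcongr
    _ = ‖Y‖ := by ring

theorem diagonal_mul_add_mul_mul_one_submatrix [CommRing R] (hf : f.Injective)
    {u : m' → R} (hu : ∀ i ∉ Set.range f, u i = 0) (X : Matrix m' m' R) (Y : Matrix m m R) :
    diagonal u * (X + (1 : Matrix m' m' R).submatrix id f * Y * (1 : Matrix m' m' R).submatrix f id)
        * (1 : Matrix m' m' R).submatrix id f
      = (1 : Matrix m' m' R).submatrix id f * (diagonal (u ∘ f) * (X.submatrix f f + Y)) := by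
  rw [← one_submatrix_mul_diagonal_comp_mul hf hu]
  set P := (1 : Matrix m' m' R).submatrix id f
  set Q := (1 : Matrix m' m' R).submatrix f id
  have hQP : Q * P = 1 := one_submatrix_mul_one_submatrix_of_injective hf
  have hQXP : Q * (X * P) = X.submatrix f f := by
    rw [one_submatrix_id_mul, mul_one_submatrix_id, submatrix_submatrix]; rfl
  simp only [Matrix.mul_add, Matrix.add_mul, Matrix.mul_assoc, hQXP]
  simp only [← Matrix.mul_assoc Q P, hQP, Matrix.one_mul, Matrix.mul_one]

theorem spectrum_subset_of_mul_eq_mul [CommRing R] {X : Matrix m' m' R} {Y : Matrix m m R}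
    {P : Matrix m' m R} {Q : Matrix m m' R} (hQP : Q * P = 1) (h : X * P = P * Y) :
    spectrum R Y ⊆ spectrum R X := by
  intro r hr
  contrapose! hr
  rw [spectrum.notMem_iff] at hr ⊢
  obtain ⟨W, hW⟩ := hr.exists_left_inv
  have hint : (algebraMap R _ r - X) * P = P * (algebraMap R _ r - Y) := by
    simp only [Matrix.sub_mul, Matrix.mul_sub, h, Algebra.algebraMap_eq_smul_one,
      Matrix.smul_mul, Matrix.mul_smul, Matrix.one_mul, Matrix.mul_one]
  refine IsUnit.of_mul_eq_one_right (Q * W * P) ?_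
  rw [Matrix.mul_assoc, Matrix.mul_assoc, ← hint, ← Matrix.mul_assoc W, hW, Matrix.one_mul, hQP]

theorem spectrum_map_diagonal_comp_mul_submatrix_subset (hf : f.Injective) {u : m' → ℝ}
    (hu : ∀ i ∉ Set.range f, u i = 0) (X : Matrix m' m' ℝ) (Y : Matrix m m ℝ) :
    spectrum ℂ ((diagonal (u ∘ f) * (X.submatrix f f + Y)).map (algebraMap ℝ ℂ))
      ⊆ spectrum ℂ ((diagonal u * (X + (1 : Matrix m' m' ℝ).submatrix id f * Y *
          (1 : Matrix m' m' ℝ).submatrix f id)).map (algebraMap ℝ ℂ)) := by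
  refine spectrum_subset_of_mul_eq_mul
    (P := ((1 : Matrix m' m' ℝ).submatrix id f).map (algebraMap ℝ ℂ))
    (Q := ((1 : Matrix m' m' ℝ).submatrix f id).map (algebraMap ℝ ℂ)) ?_ ?_
  · rw [← Matrix.map_mul, one_submatrix_mul_one_submatrix_of_injective hf,
      Matrix.map_one _ (map_zero _) (map_one _)]
  · rw [← Matrix.map_mul, ← Matrix.map_mul, diagonal_mul_add_mul_mul_one_submatrix hf hu]

theorem add_mem_spectrum_diagonal_mul_add_smul_diagonal_inv {d : m → ℝ} (hd : ∀ i, d i ≠ 0)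
    (X : Matrix m m ℝ) (c : ℝ) {w : ℂ}
    (hw : w ∈ spectrum ℂ ((diagonal d * X).map (algebraMap ℝ ℂ))) :
    w + c ∈ spectrum ℂ ((diagonal d * (X + c • diagonal d⁻¹)).map (algebraMap ℝ ℂ)) := by
  have hshift : diagonal d * (X + c • diagonal d⁻¹) = algebraMap ℝ _ c + diagonal d * X := by
    rw [mul_add, Matrix.mul_smul, diagonal_mul_diagonal, add_comm,
      Algebra.algebraMap_eq_smul_one, ← diagonal_one]
    congr
    funext i
    exact mul_inv_cancel₀ (hd i)
  rw [hshift, Matrix.map_add _ (map_add _), Matrix.map_algebraMap c _ (map_zero _) (by simp),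
    IsScalarTower.algebraMap_apply ℝ ℂ]
  exact spectrum.add_mem_add_iff.mpr hw

end Matrix

theorem opNorm2_eq_l2_opNorm {m : Type*} [Fintype m] [DecidableEq m] (M : Matrix m m ℝ) :
    opNorm2 M = ‖M‖ :=
  rfl

theorem extend_sigma_fst_eq_zero_of_notMem_range {ι κ γ : Type*} [Zero γ] {β : ι → Type*}
    {e : κ → ι} (d : κ → γ) {p : (i : ι) × β i}
    (hp : p ∉ Set.range (Sigma.map e fun k => (id : β (e k) → β (e k)))) :
    Function.extend e d 0 p.1 = 0 := by
  refine Function.extend_apply' _ _ _ ?_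
  rintro ⟨k, hk⟩
  obtain ⟨i, j⟩ := p
  subst hk
  exact hp ⟨⟨k, j⟩, rfl⟩

theorem RobustBlockDStable.submatrix_sigmaMap {ι κ : Type*} [Fintype ι] [DecidableEq ι]
    [Fintype κ] [DecidableEq κ] {n : ι → ℕ} {e : κ → ι}
    {A : Matrix ((i : ι) × Fin (n i)) ((i : ι) × Fin (n i)) ℝ} (hA : RobustBlockDStable A)
    (he : e.Injective) :
    RobustBlockDStable (n := fun k => n (e k))
      (A.submatrix (Sigma.map e fun _ => id) (Sigma.map e fun _ => id)) := by
  obtain ⟨μ, hμ, hA⟩ := hA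
  refine ⟨μ / 2, by positivity, fun B hB d hd w hw => ?_⟩
  by_contra! hw_re
  set Dinv := diagonal (fun p : (k : κ) × Fin (n (e k)) => d p.1)⁻¹
  set c := μ / 2 / (‖Dinv‖ + 1)
  have hc : 0 < c := by positivity
  have hcDinv : ‖c • Dinv‖ ≤ μ / 2 := by
    rw [norm_smul, Real.norm_of_nonneg hc.le, div_mul_eq_mul_div, div_le_iff₀ (by positivity)]
    nlinarith [norm_nonneg Dinv]
  set f : (k : κ) × Fin (n (e k)) → (i : ι) × Fin (n i) := Sigma.map e fun _ => id
  have hf : f.Injective := he.sigma_map fun _ => Function.injective_id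
  set u : (i : ι) × Fin (n i) → ℝ := fun p => Function.extend e d 0 p.1
  have hshift : w + c ∈ spectrum ℂ
      ((diagonal (u ∘ f) * (A.submatrix f f + (B + c • Dinv))).map (algebraMap ℝ ℂ)) := by
    rw [show u ∘ f = fun p => d p.1 from funext fun p => he.extend_apply d 0 p.1, ← add_assoc]
    exact add_mem_spectrum_diagonal_mul_add_smul_diagonal_inv
      (d := fun p : (k : κ) × Fin (n (e k)) => d p.1) (fun p => (hd p.1).ne')
      (A.submatrix f f + B) c hw
  have hstable := hA ((1 : Matrix _ _ ℝ).submatrix id f * (B + c • Dinv) *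
      (1 : Matrix _ _ ℝ).submatrix f id) <| by
    rw [opNorm2_eq_l2_opNorm]
    refine (l2_opNorm_one_submatrix_mul_mul_le hf (B + c • Dinv)).trans ?_
    linarith [norm_add_le B (c • Dinv), opNorm2_eq_l2_opNorm B]
  have hd_ext : ∀ i, 0 ≤ Function.extend e d 0 i := by
    intro i
    by_cases h : ∃ k, e k = i
    · obtain ⟨k, rfl⟩ := h
      exact (he.extend_apply d 0 k).symm ▸ (hd k).le
    · exact (Function.extend_apply' _ _ _ h).symm ▸ le_rfl
  have := hstable.re_nonpos_of_nonneg hd_ext _ (spectrum_map_diagonal_comp_mul_submatrix_subset hf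
    (fun p hp => extend_sigma_fst_eq_zero_of_notMem_range d hp) A _ hshift)
  simp only [Complex.add_re, Complex.ofReal_re] at this
  linarith

theorem robust_block_D_stable_submatrix_general
    (N : ℕ) (n : Fin N → ℕ)
    (A : Matrix ((i : Fin N) × Fin (n i)) ((i : Fin N) × Fin (n i)) ℝ)
    (hA : RobustBlockDStable A)
    (α : Finset (Fin N)) :
    RobustBlockDStable
      (fun (p q : (i : {x : Fin N // x ∈ α}) × Fin (n i.1)) =>
        A ⟨p.1.1, p.2⟩ ⟨q.1.1, q.2⟩) :=
  hA.submatrix_sigmaMap Subtype.val_injective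

theorem robust_block_D_stable_submatrix
    (N : ℕ) (hN : 0 < N) (n : Fin N → ℕ) (hn : ∀ i, 0 < n i)
    (A : Matrix ((i : Fin N) × Fin (n i)) ((i : Fin N) × Fin (n i)) ℝ)
    (hA : RobustBlockDStable A)
    (α : Finset (Fin N)) (hα : α.Nonempty) :
    RobustBlockDStable
      (fun (p q : (i : {x : Fin N // x ∈ α}) × Fin (n i.1)) =>
        A ⟨p.1.1, p.2⟩ ⟨q.1.1, q.2⟩) :=
  robust_block_D_stable_submatrix_general N n A hA α
end

section
/- If an n×n block-partitioned real matrix A is robustly block D-stable and α ⊊ {1,…,N} is a nonempty proper index set with complement ᾱ, then the block principal submatrix A_{α,α} is invertible and the Schur complement A/A_{α,α} := A_{ᾱ,ᾱ} − A_{ᾱ,α} A_{α,α}⁻¹ A_{α,ᾱ} is robustly block D-stable with respect to the induced block partition (n_i)_{i∈ᾱ}. -/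
open Matrix

/-!
A block D-stable matrix stays *semistable* (spectrum in the closed left half-plane) under
nonnegative block scalings: for Hurwitz `M` and `0 < re z` every factor of
`det (z - M) = ∏ (z - λ)` has modulus at least `re z`, and this bound survives limits.
Scaling the blocks outside `α` by `0` makes `A_αα` semistable. The inverse `A⁻¹` is again block
D-stable and `(A⁻¹)_ᾱᾱ = S⁻¹` for the Schur complement `S`; scaling `A⁻¹` by `0` on `α` and by
`D⁻¹` on `ᾱ` makes `D⁻¹ S⁻¹ = (S D)⁻¹` semistable, hence also `D S`.
Robustness turns semistability into stability: perturbing the block `A_αα` by `δ • 1` shows that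
`A_αα + δ • 1` is semistable, so `A_αα` is Hurwitz and invertible, and perturbing `A_ᾱᾱ` by
`B + t • D⁻¹` shifts `D (S + B)` by `t • 1`.
-/

open Polynomial Filter Topology

section Spectrum

variable {m m' : Type*} [Fintype m] [DecidableEq m] [Fintype m'] [DecidableEq m']

def IsSemistable (M : Matrix m m ℝ) : Prop :=
  ∀ μ ∈ spectrum ℂ (M.map (algebraMap ℝ ℂ)), μ.re ≤ 0

lemma spectrum_map_subset_of_charpoly_dvd {M : Matrix m m ℝ} {M' : Matrix m' m' ℝ}
    (h : M'.charpoly ∣ M.charpoly) :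
    spectrum ℂ (M'.map (algebraMap ℝ ℂ)) ⊆ spectrum ℂ (M.map (algebraMap ℝ ℂ)) := by
  intro z hz
  rw [mem_spectrum_iff_isRoot_charpoly, charpoly_map] at hz ⊢
  exact hz.dvd (Polynomial.map_dvd _ h)

lemma IsHurwitz.of_charpoly_dvd {M : Matrix m m ℝ} {M' : Matrix m' m' ℝ} (hM : IsHurwitz M)
    (h : M'.charpoly ∣ M.charpoly) : IsHurwitz M' :=
  fun z hz => hM z (spectrum_map_subset_of_charpoly_dvd h hz)

lemma IsSemistable.of_charpoly_dvd {M : Matrix m m ℝ} {M' : Matrix m' m' ℝ}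
    (hM : IsSemistable M) (h : M'.charpoly ∣ M.charpoly) : IsSemistable M' :=
  fun z hz => hM z (spectrum_map_subset_of_charpoly_dvd h hz)

lemma IsHurwitz.isUnit {M : Matrix m m ℝ} (hM : IsHurwitz M) : IsUnit M := by
  by_contra h
  have : ¬IsUnit (M.map (algebraMap ℝ ℂ)) := by
    rwa [isUnit_iff_isUnit_det, ← RingHom.mapMatrix_apply, ← RingHom.map_det, isUnit_map_iff,
      ← isUnit_iff_isUnit_det]
  simpa using hM 0 (spectrum.zero_mem_iff ℂ |>.mpr this)

lemma isHurwitz_of_isSemistable_add_smul_one {M : Matrix m m ℝ} {t : ℝ}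
    (h : IsSemistable (M + t • 1)) (ht : 0 < t) : IsHurwitz M := by
  intro z hz
  have hmap : (M + t • 1).map (algebraMap ℝ ℂ) =
      M.map (algebraMap ℝ ℂ) + algebraMap ℂ _ (t : ℂ) := by
    ext i j
    rcases eq_or_ne i j with rfl | hij <;> simp [Matrix.algebraMap_matrix_apply, *]
  have := h (z + t) (by rw [hmap, ← spectrum.add_singleton_eq]; exact Set.add_mem_add hz rfl)
  simp only [Complex.add_re, Complex.ofReal_re] at this
  linarith

lemma IsHurwitz.re_pow_card_le_norm_eval_charpoly {M : Matrix m m ℝ} (hM : IsHurwitz M) {z : ℂ}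
    (hz : 0 < z.re) :
    z.re ^ Fintype.card m ≤ ‖(M.map (algebraMap ℝ ℂ)).charpoly.eval z‖ := by
  set p := (M.map (algebraMap ℝ ℂ)).charpoly
  have hp : p.Splits := IsAlgClosed.splits p
  rw [hp.eval_eq_prod_roots_of_monic (charpoly_monic _)]
  calc z.re ^ Fintype.card m = (p.roots.map fun _ => z.re).prod := by
        rw [Multiset.map_const', Multiset.prod_replicate, splits_iff_card_roots.mp hp,
          charpoly_natDegree_eq_dim]
    _ ≤ (p.roots.map fun w => ‖z - w‖).prod := by
        refine Multiset.prod_map_le_prod_map₀ _ _ (fun _ _ => hz.le) fun w hw => ?_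
        have hw : w.re < 0 :=
          hM w (mem_spectrum_iff_isRoot_charpoly.mpr (isRoot_of_mem_roots hw))
        calc z.re ≤ (z - w).re := by simp only [Complex.sub_re]; linarith
          _ ≤ ‖z - w‖ := Complex.re_le_norm _
    _ = ‖(p.roots.map (z - ·)).prod‖ := by
        rw [← normHom_apply, map_multiset_prod, Multiset.map_map]
        rfl

lemma continuous_norm_eval_charpoly_map (z : ℂ) :
    Continuous fun M : Matrix m m ℝ => ‖(M.map (algebraMap ℝ ℂ)).charpoly.eval z‖ := by
  simp_rw [eval_charpoly]
  fun_prop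

lemma isSemistable_of_tendsto {X : Type*} {l : Filter X} [l.NeBot] {M : X → Matrix m m ℝ}
    {M₀ : Matrix m m ℝ} (hM : Tendsto M l (𝓝 M₀)) (h : ∀ᶠ x in l, IsHurwitz (M x)) :
    IsSemistable M₀ := by
  intro z hz
  by_contra! hre
  have hbound : z.re ^ Fintype.card m ≤ ‖(M₀.map (algebraMap ℝ ℂ)).charpoly.eval z‖ :=
    ge_of_tendsto ((continuous_norm_eval_charpoly_map z).continuousAt.tendsto.comp hM)
      (h.mono fun x hx => hx.re_pow_card_le_norm_eval_charpoly hre)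
  rw [mem_spectrum_iff_isRoot_charpoly.mp hz, norm_zero] at hbound
  exact (pow_pos hre _).not_ge hbound

lemma Matrix.map_nonsing_inv {R S : Type*} [CommRing R] [CommRing S] (f : R →+* S)
    {M : Matrix m m R} (hM : IsUnit M) : M⁻¹.map f = (M.map f)⁻¹ := by
  refine (inv_eq_left_inv ?_).symm
  rw [← Matrix.map_mul, nonsing_inv_mul _ ((isUnit_iff_isUnit_det M).mp hM),
    Matrix.map_one _ f.map_zero f.map_one]

lemma inv_mem_spectrum_map_of_mem_inv {M : Matrix m m ℝ} (hM : IsUnit M) {z : ℂ}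
    (hz : z ∈ spectrum ℂ (M⁻¹.map (algebraMap ℝ ℂ))) :
    z⁻¹ ∈ spectrum ℂ (M.map (algebraMap ℝ ℂ)) := by
  obtain ⟨u, hu⟩ := hM.map (algebraMap ℝ ℂ).mapMatrix
  rw [Matrix.map_nonsing_inv _ hM, ← RingHom.mapMatrix_apply, ← hu, ← coe_units_inv,
    ← spectrum.map_inv] at hz
  rwa [← RingHom.mapMatrix_apply, ← hu]

lemma Complex.re_eq_inv_re_mul_normSq (z : ℂ) : z.re = z⁻¹.re * Complex.normSq z := by
  rcases eq_or_ne z 0 with rfl | hz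
  · simp
  · rw [Complex.inv_re, div_mul_cancel₀ _ (Complex.normSq_pos.mpr hz).ne']

lemma IsHurwitz.inv {M : Matrix m m ℝ} (hM : IsHurwitz M) : IsHurwitz M⁻¹ := by
  intro z hz
  have hre := hM _ (inv_mem_spectrum_map_of_mem_inv hM.isUnit hz)
  have hz0 : z ≠ 0 := by rintro rfl; simp at hre
  rw [Complex.re_eq_inv_re_mul_normSq]
  exact mul_neg_of_neg_of_pos hre (Complex.normSq_pos.mpr hz0)

lemma IsSemistable.inv {M : Matrix m m ℝ} (hM : IsSemistable M) (hu : IsUnit M) :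
    IsSemistable M⁻¹ := by
  intro z hz
  rw [Complex.re_eq_inv_re_mul_normSq]
  exact mul_nonpos_of_nonpos_of_nonneg (hM _ (inv_mem_spectrum_map_of_mem_inv hu hz))
    (Complex.normSq_nonneg z)

end Spectrum

section OpNorm2

variable {k l m : Type*} [Fintype k] [DecidableEq k] [Fintype l] [DecidableEq l]
  [Fintype m] [DecidableEq m]

lemma opNorm2_nonneg (X : Matrix m m ℝ) : 0 ≤ opNorm2 X := norm_nonneg _

lemma opNorm2_zero : opNorm2 (0 : Matrix m m ℝ) = 0 := by
  rw [opNorm2, map_zero, norm_zero]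

lemma opNorm2_add_le (X Y : Matrix m m ℝ) : opNorm2 (X + Y) ≤ opNorm2 X + opNorm2 Y := by
  unfold opNorm2
  rw [map_add]
  exact norm_add_le _ _

lemma opNorm2_smul (t : ℝ) (X : Matrix m m ℝ) : opNorm2 (t • X) = |t| * opNorm2 X := by
  unfold opNorm2
  rw [map_smul, norm_smul, Real.norm_eq_abs]

lemma opNorm2_one_le : opNorm2 (1 : Matrix m m ℝ) ≤ 1 := by
  unfold opNorm2
  rw [map_one]
  exact ContinuousLinearMap.norm_id_le

set_option synthInstance.maxHeartbeats 40000 in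
lemma exists_opNorm2_le_of_linearMap (L : Matrix k k ℝ × Matrix l l ℝ →ₗ[ℝ] Matrix m m ℝ) :
    ∃ C, ∀ X Y, opNorm2 (L (X, Y)) ≤ C * (opNorm2 X + opNorm2 Y) := by
  let e₁ := (toEuclideanCLM (n := k) (𝕜 := ℝ)).toAlgEquiv.toLinearEquiv
  let e₂ := (toEuclideanCLM (n := l) (𝕜 := ℝ)).toAlgEquiv.toLinearEquiv
  let e := (toEuclideanCLM (n := m) (𝕜 := ℝ)).toAlgEquiv.toLinearMap
  let L' := LinearMap.toContinuousLinearMap (e ∘ₗ L ∘ₗ (e₁.prodCongr e₂).symm.toLinearMap)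
  refine ⟨‖L'‖, fun X Y => ?_⟩
  have h := L'.le_opNorm (toEuclideanCLM (𝕜 := ℝ) X, toEuclideanCLM (𝕜 := ℝ) Y)
  have hXY : ‖(toEuclideanCLM (𝕜 := ℝ) X, toEuclideanCLM (𝕜 := ℝ) Y)‖ ≤ opNorm2 X + opNorm2 Y :=
    max_le_add_of_nonneg (norm_nonneg _) (norm_nonneg _)
  calc opNorm2 (L (X, Y)) = ‖L' (toEuclideanCLM (𝕜 := ℝ) X, toEuclideanCLM (𝕜 := ℝ) Y)‖ := by
        simp [L', e, e₁, e₂, opNorm2]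
    _ ≤ _ := h.trans (mul_le_mul_of_nonneg_left hXY (norm_nonneg _))

end OpNorm2

section SchurComplement

variable {k l K : Type*} [Fintype k] [DecidableEq k] [Fintype l] [DecidableEq l] [CommRing K]
  {P : Matrix k k K} {Q : Matrix k l K} {R : Matrix l k K} {T : Matrix l l K}

lemma isUnit_schur_of_isUnit_fromBlocks (hP : IsUnit P) (h : IsUnit (fromBlocks P Q R T)) :
    IsUnit (T - R * P⁻¹ * Q) := by
  let := P.invertibleOfIsUnitDet ((isUnit_iff_isUnit_det P).mp hP)
  rwa [← invOf_eq_nonsing_inv, ← isUnit_fromBlocks_iff_of_invertible₁₁]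

lemma toBlocks₂₂_inv_fromBlocks (hP : IsUnit P) (h : IsUnit (fromBlocks P Q R T)) :
    (fromBlocks P Q R T)⁻¹.toBlocks₂₂ = (T - R * P⁻¹ * Q)⁻¹ := by
  have hS := isUnit_schur_of_isUnit_fromBlocks hP h
  let := P.invertibleOfIsUnitDet ((isUnit_iff_isUnit_det P).mp hP)
  rw [← invOf_eq_nonsing_inv P] at hS ⊢
  let := (T - R * ⅟P * Q).invertibleOfIsUnitDet ((isUnit_iff_isUnit_det _).mp hS)
  let := fromBlocks₁₁Invertible P Q R T
  rw [← invOf_eq_nonsing_inv, invOf_fromBlocks₁₁_eq, toBlocks_fromBlocks₂₂, invOf_eq_nonsing_inv]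

end SchurComplement

section BlockDStable

variable {ι : Type*} [Fintype ι] [DecidableEq ι] {n : ι → ℕ}
  {A : Matrix ((i : ι) × Fin (n i)) ((i : ι) × Fin (n i)) ℝ}

lemma BlockDStable.isHurwitz (hA : BlockDStable A) : IsHurwitz A := by
  simpa using hA 1 fun _ => one_pos

lemma BlockDStable.diagonal_mul (hA : BlockDStable A) {w : ι → ℝ} (hw : ∀ i, 0 < w i) :
    BlockDStable (diagonal (fun p => w p.1) * A) := fun d hd => by
  simpa [← Matrix.mul_assoc, diagonal_mul_diagonal] using
    hA (d * w) fun i => mul_pos (hd i) (hw i)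

lemma BlockDStable.inv (hA : BlockDStable A) : BlockDStable A⁻¹ := by
  intro d hd
  have hD : (diagonal fun p : (i : ι) × Fin (n i) => (d p.1)⁻¹)⁻¹ = diagonal fun p => d p.1 :=
    inv_eq_left_inv (by simp [diagonal_mul_diagonal, (hd _).ne'])
  -- `D A⁻¹` has the characteristic polynomial of `A⁻¹ D = (D⁻¹ A)⁻¹`
  refine ((hA.diagonal_mul fun i => inv_pos.mpr (hd i)).isHurwitz.inv).of_charpoly_dvd
    (dvd_of_eq ?_)
  rw [Matrix.mul_inv_rev, hD, charpoly_mul_comm]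

lemma BlockDStable.isSemistable_diagonal_mul (hA : BlockDStable A) {w : ι → ℝ}
    (hw : ∀ i, 0 ≤ w i) : IsSemistable (diagonal (fun p => w p.1) * A) := by
  refine isSemistable_of_tendsto (l := 𝓝[>] 0) (M := fun ε => diagonal (fun p => w p.1 + ε) * A)
    ?_ (eventually_nhdsWithin_of_forall fun ε hε => ?_)
  · have : Continuous fun ε : ℝ => diagonal (fun p : (i : ι) × Fin (n i) => w p.1 + ε) * A :=
      (Continuous.matrix_diagonal (by fun_prop)).matrix_mul continuous_const
    simpa using this.continuousWithinAt.tendsto (x := 0) (s := Set.Ioi 0)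
  · exact hA (fun i => w i + ε) fun i => add_pos_of_nonneg_of_pos (hw i) hε

end BlockDStable

section BlockSplit

variable {ι : Type*} [DecidableEq ι] {n : ι → ℕ} {α : Finset ι}

variable (α) in
def blockSplit :
    ((i : {x // x ∈ α}) × Fin (n i.1)) ⊕ ((i : {x // x ∉ α}) × Fin (n i.1)) ≃
      (i : ι) × Fin (n i) where
  toFun := Sum.elim (fun p => ⟨p.1.1, p.2⟩) (fun p => ⟨p.1.1, p.2⟩)
  invFun p := if h : p.1 ∈ α then .inl ⟨⟨p.1, h⟩, p.2⟩ else .inr ⟨⟨p.1, h⟩, p.2⟩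
  left_inv := by rintro (p | p) <;> simp [p.1.2]
  right_inv p := by by_cases h : p.1 ∈ α <;> simp [h]

variable (α) in
def blockPerturbation :
    Matrix ((i : {x // x ∈ α}) × Fin (n i.1)) ((i : {x // x ∈ α}) × Fin (n i.1)) ℝ ×
      Matrix ((i : {x // x ∉ α}) × Fin (n i.1)) ((i : {x // x ∉ α}) × Fin (n i.1)) ℝ →ₗ[ℝ]
      Matrix ((i : ι) × Fin (n i)) ((i : ι) × Fin (n i)) ℝ where
  toFun XY := (fromBlocks XY.1 0 0 XY.2).submatrix (blockSplit α).symm (blockSplit α).symm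
  map_add' X Y := by
    change _ = (fromBlocks X.1 0 0 X.2 + fromBlocks Y.1 0 0 Y.2).submatrix _ _
    simp only [fromBlocks_add, add_zero]
    rfl
  map_smul' t X := by
    change _ = (t • fromBlocks X.1 0 0 X.2).submatrix _ _
    simp only [fromBlocks_smul, smul_zero]
    rfl

variable {A : Matrix ((i : ι) × Fin (n i)) ((i : ι) × Fin (n i)) ℝ}
  {P : Matrix ((i : {x // x ∈ α}) × Fin (n i.1)) ((i : {x // x ∈ α}) × Fin (n i.1)) ℝ}
  {Q : Matrix ((i : {x // x ∈ α}) × Fin (n i.1)) ((i : {x // x ∉ α}) × Fin (n i.1)) ℝ}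
  {R : Matrix ((i : {x // x ∉ α}) × Fin (n i.1)) ((i : {x // x ∈ α}) × Fin (n i.1)) ℝ}
  {T : Matrix ((i : {x // x ∉ α}) × Fin (n i.1)) ((i : {x // x ∉ α}) × Fin (n i.1)) ℝ}

lemma submatrix_add_blockPerturbation
    (hM : A.submatrix (blockSplit α) (blockSplit α) = fromBlocks P Q R T) (X Y) :
    (A + blockPerturbation α (X, Y)).submatrix (blockSplit α) (blockSplit α) =
      fromBlocks (P + X) Q R (T + Y) := by
  rw [submatrix_add, Pi.add_apply, Pi.add_apply, hM, blockPerturbation, LinearMap.coe_mk,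
    AddHom.coe_mk, submatrix_submatrix, Equiv.symm_comp_self, submatrix_id_id, fromBlocks_add,
    add_zero, add_zero]

variable [Fintype ι]

lemma submatrix_blockSplit_diagonal_mul (w : ι → ℝ) :
    ((diagonal fun p : (i : ι) × Fin (n i) => w p.1) * A).submatrix (blockSplit α)
        (blockSplit α) =
      let M := A.submatrix (blockSplit α) (blockSplit α)
      let D₁ : Matrix ((i : {x // x ∈ α}) × Fin (n i.1)) _ ℝ := diagonal fun p => w p.1.1
      let D₂ : Matrix ((i : {x // x ∉ α}) × Fin (n i.1)) _ ℝ := diagonal fun p => w p.1.1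
      fromBlocks (D₁ * M.toBlocks₁₁) (D₁ * M.toBlocks₁₂) (D₂ * M.toBlocks₂₁)
        (D₂ * M.toBlocks₂₂) := by
  ext (p | p) (q | q) <;>
    simp [diagonal_mul, blockSplit, toBlocks₁₁, toBlocks₁₂, toBlocks₂₁, toBlocks₂₂]

lemma BlockDStable.isSemistable_block₁₁ (hA : BlockDStable A)
    (hM : A.submatrix (blockSplit α) (blockSplit α) = fromBlocks P Q R T) : IsSemistable P := by
  have h := hA.isSemistable_diagonal_mul (w := fun i => if i ∈ α then 1 else 0)
    fun i => by positivity
  refine h.of_charpoly_dvd ⟨(0 : Matrix ((i : {x // x ∉ α}) × Fin (n i.1)) _ ℝ).charpoly, ?_⟩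
  rw [← charpoly_reindex (blockSplit α).symm, reindex_apply, Equiv.symm_symm,
    submatrix_blockSplit_diagonal_mul (fun i => if i ∈ α then 1 else 0), hM]
  simp [fun p : (i : {x // x ∉ α}) × Fin (n i.1) => p.1.2]

lemma BlockDStable.isSemistable_diagonal_mul_block₂₂ (hA : BlockDStable A)
    (hM : A.submatrix (blockSplit α) (blockSplit α) = fromBlocks P Q R T)
    {d : {x // x ∉ α} → ℝ} (hd : ∀ i, 0 ≤ d i) :
    IsSemistable ((diagonal fun p : (i : {x // x ∉ α}) × Fin (n i.1) => d p.1) * T) := by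
  set w : ι → ℝ := fun i => if h : i ∈ α then 0 else d ⟨i, h⟩
  have h := hA.isSemistable_diagonal_mul (w := w) fun i => by unfold w; split_ifs <;> simp [*]
  refine h.of_charpoly_dvd ⟨(0 : Matrix ((i : {x // x ∈ α}) × Fin (n i.1)) _ ℝ).charpoly, ?_⟩
  rw [← charpoly_reindex (blockSplit α).symm, reindex_apply, Equiv.symm_symm,
    submatrix_blockSplit_diagonal_mul w, hM]
  simp [w, fun p : (i : {x // x ∉ α}) × Fin (n i.1) => p.1.2, mul_comm]

lemma BlockDStable.isSemistable_diagonal_mul_schur (hA : BlockDStable A)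
    (hM : A.submatrix (blockSplit α) (blockSplit α) = fromBlocks P Q R T) (hP : IsUnit P)
    {d : {x // x ∉ α} → ℝ} (hd : ∀ i, 0 < d i) :
    IsSemistable ((diagonal fun p : (i : {x // x ∉ α}) × Fin (n i.1) => d p.1) *
      (T - R * P⁻¹ * Q)) := by
  set S := T - R * P⁻¹ * Q
  set D : Matrix ((i : {x // x ∉ α}) × Fin (n i.1)) _ ℝ := diagonal fun p => d p.1
  have hPQRT : IsUnit (fromBlocks P Q R T) := by
    rw [← hM]
    exact (isUnit_submatrix_equiv _ _).mpr hA.isHurwitz.isUnit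
  have hS : IsUnit S := isUnit_schur_of_isUnit_fromBlocks hP hPQRT
  have hinv : A⁻¹.submatrix (blockSplit α) (blockSplit α) =
      fromBlocks (fromBlocks P Q R T)⁻¹.toBlocks₁₁ (fromBlocks P Q R T)⁻¹.toBlocks₁₂
        (fromBlocks P Q R T)⁻¹.toBlocks₂₁ S⁻¹ := by
    rw [← toBlocks₂₂_inv_fromBlocks hP hPQRT, fromBlocks_toBlocks, ← hM, inv_submatrix_equiv]
  have hDinv : (diagonal fun p : (i : {x // x ∉ α}) × Fin (n i.1) => (d p.1)⁻¹) = D⁻¹ := by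
    refine (inv_eq_left_inv ?_).symm
    simp [D, diagonal_mul_diagonal, (hd _).ne']
  -- `D⁻¹ S⁻¹` is a scaled principal block of `A⁻¹`, and its inverse `S D` is similar to `D S`
  have h := hA.inv.isSemistable_diagonal_mul_block₂₂ hinv (d := fun i => (d i)⁻¹)
    fun i => (inv_pos.mpr (hd i)).le
  rw [hDinv, ← Matrix.mul_inv_rev] at h
  have hSD : IsUnit (S * D) := hS.mul (by simp [D, isUnit_diagonal, Pi.isUnit_iff, (hd _).ne'])
  refine (h.inv (isUnit_nonsing_inv_iff.mpr hSD)).of_charpoly_dvd (dvd_of_eq ?_)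
  rw [nonsing_inv_nonsing_inv _ ((isUnit_iff_isUnit_det _).mp hSD), charpoly_mul_comm]

lemma RobustBlockDStable.exists_blockPerturbation (hA : RobustBlockDStable A) :
    ∃ δ > 0, ∀ X Y, opNorm2 X + opNorm2 Y ≤ δ →
      BlockDStable (A + blockPerturbation α (X, Y)) := by
  obtain ⟨μ, hμ, hrob⟩ := hA
  obtain ⟨C, hC⟩ := exists_opNorm2_le_of_linearMap (blockPerturbation (n := n) α)
  refine ⟨μ / (|C| + 1), by positivity, fun X Y h => hrob _ ((hC X Y).trans ?_)⟩
  calc C * (opNorm2 X + opNorm2 Y) ≤ |C| * (μ / (|C| + 1)) :=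
        mul_le_mul (le_abs_self C) h (add_nonneg (opNorm2_nonneg _) (opNorm2_nonneg _))
          (abs_nonneg C)
    _ ≤ μ := by
        rw [mul_div_assoc', div_le_iff₀ (by positivity)]
        nlinarith

lemma RobustBlockDStable.isUnit_block₁₁ (hA : RobustBlockDStable A)
    (hM : A.submatrix (blockSplit α) (blockSplit α) = fromBlocks P Q R T) : IsUnit P := by
  obtain ⟨δ, hδ, hpert⟩ := hA.exists_blockPerturbation (α := α)
  have hB := hpert (δ • 1) 0 (by
    rw [opNorm2_smul, abs_of_pos hδ, opNorm2_zero, add_zero]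
    exact mul_le_of_le_one_right hδ.le opNorm2_one_le)
  exact (isHurwitz_of_isSemistable_add_smul_one
    (hB.isSemistable_block₁₁ (submatrix_add_blockPerturbation hM _ _)) hδ).isUnit

lemma RobustBlockDStable.schurComplement (hA : RobustBlockDStable A)
    (hM : A.submatrix (blockSplit α) (blockSplit α) = fromBlocks P Q R T) :
    RobustBlockDStable (T - R * P⁻¹ * Q) := by
  obtain ⟨δ, hδ, hpert⟩ := hA.exists_blockPerturbation (α := α)
  refine ⟨δ / 2, by positivity, fun B hB d hd => ?_⟩
  set Dinv : Matrix ((i : {x // x ∉ α}) × Fin (n i.1)) _ ℝ := diagonal fun p => (d p.1)⁻¹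
  set t := δ / 2 / (opNorm2 Dinv + 1)
  have hDinv := opNorm2_nonneg Dinv
  have ht : 0 < t := by positivity
  have hY : opNorm2 (B + t • Dinv) ≤ δ := by
    have htD : t * opNorm2 Dinv ≤ δ / 2 := by
      rw [div_mul_eq_mul_div, div_le_iff₀ (by positivity)]
      nlinarith
    calc opNorm2 (B + t • Dinv) ≤ opNorm2 B + t * opNorm2 Dinv :=
          (opNorm2_add_le _ _).trans_eq (by rw [opNorm2_smul, abs_of_pos ht])
      _ ≤ δ := by linarith
  -- perturbing `T` by `B + t D⁻¹` shifts the scaled Schur complement `D (S + B)` by `t`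
  have h := (hpert 0 (B + t • Dinv) (by simpa [opNorm2_zero] using hY))
    |>.isSemistable_diagonal_mul_schur (submatrix_add_blockPerturbation hM _ _)
      (by rw [add_zero]; exact hA.isUnit_block₁₁ hM) hd
  refine isHurwitz_of_isSemistable_add_smul_one ?_ ht
  convert h using 1
  have hDDinv : (diagonal fun p => d p.1) * Dinv = 1 := by
    simp [Dinv, diagonal_mul_diagonal, (hd _).ne']
  rw [add_zero, show T + (B + t • Dinv) - R * P⁻¹ * Q = (T - R * P⁻¹ * Q + B) + t • Dinv by abel,
    Matrix.mul_add _ (T - R * P⁻¹ * Q + B), Matrix.mul_smul, hDDinv]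

end BlockSplit

theorem robust_block_D_stable_schur_complement_general
    (N : ℕ) (n : Fin N → ℕ)
    (A : Matrix ((i : Fin N) × Fin (n i)) ((i : Fin N) × Fin (n i)) ℝ)
    (hA : RobustBlockDStable A)
    (α : Finset (Fin N)) :
    -- the block principal submatrices of `A`
    letI Aαα : Matrix ((i : {x : Fin N // x ∈ α}) × Fin (n i.1))
        ((i : {x : Fin N // x ∈ α}) × Fin (n i.1)) ℝ :=
      fun p q => A ⟨p.1.1, p.2⟩ ⟨q.1.1, q.2⟩
    letI Aᾱα : Matrix ((i : {x : Fin N // x ∉ α}) × Fin (n i.1))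
        ((i : {x : Fin N // x ∈ α}) × Fin (n i.1)) ℝ :=
      fun p q => A ⟨p.1.1, p.2⟩ ⟨q.1.1, q.2⟩
    letI Aαᾱ : Matrix ((i : {x : Fin N // x ∈ α}) × Fin (n i.1))
        ((i : {x : Fin N // x ∉ α}) × Fin (n i.1)) ℝ :=
      fun p q => A ⟨p.1.1, p.2⟩ ⟨q.1.1, q.2⟩
    letI Aᾱᾱ : Matrix ((i : {x : Fin N // x ∉ α}) × Fin (n i.1))
        ((i : {x : Fin N // x ∉ α}) × Fin (n i.1)) ℝ :=
      fun p q => A ⟨p.1.1, p.2⟩ ⟨q.1.1, q.2⟩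
    IsUnit Aαα ∧ RobustBlockDStable (Aᾱᾱ - Aᾱα * Aαα⁻¹ * Aαᾱ) :=
  have hM := (fromBlocks_toBlocks (A.submatrix (blockSplit α) (blockSplit α))).symm
  ⟨hA.isUnit_block₁₁ hM, hA.schurComplement hM⟩

theorem robust_block_D_stable_schur_complement
    (N : ℕ) (hN : 0 < N) (n : Fin N → ℕ) (hn : ∀ i, 0 < n i)
    (A : Matrix ((i : Fin N) × Fin (n i)) ((i : Fin N) × Fin (n i)) ℝ)
    (hA : RobustBlockDStable A)
    (α : Finset (Fin N)) (hne : α.Nonempty) (hproper : α ≠ Finset.univ) :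
    -- the block principal submatrices of `A`
    letI Aαα : Matrix ((i : {x : Fin N // x ∈ α}) × Fin (n i.1))
        ((i : {x : Fin N // x ∈ α}) × Fin (n i.1)) ℝ :=
      fun p q => A ⟨p.1.1, p.2⟩ ⟨q.1.1, q.2⟩
    letI Aᾱα : Matrix ((i : {x : Fin N // x ∉ α}) × Fin (n i.1))
        ((i : {x : Fin N // x ∈ α}) × Fin (n i.1)) ℝ :=
      fun p q => A ⟨p.1.1, p.2⟩ ⟨q.1.1, q.2⟩
    letI Aαᾱ : Matrix ((i : {x : Fin N // x ∈ α}) × Fin (n i.1))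
        ((i : {x : Fin N // x ∉ α}) × Fin (n i.1)) ℝ :=
      fun p q => A ⟨p.1.1, p.2⟩ ⟨q.1.1, q.2⟩
    letI Aᾱᾱ : Matrix ((i : {x : Fin N // x ∉ α}) × Fin (n i.1))
        ((i : {x : Fin N // x ∉ α}) × Fin (n i.1)) ℝ :=
      fun p q => A ⟨p.1.1, p.2⟩ ⟨q.1.1, q.2⟩
    IsUnit Aαα ∧ RobustBlockDStable (Aᾱᾱ - Aᾱα * Aαα⁻¹ * Aαᾱ) :=
  robust_block_D_stable_schur_complement_general N n A hA α
end

section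
/- Let A be an n×n block-partitioned real matrix, Q a symmetric positive definite n×n matrix, M > 0, and let μ satisfy 0 < μ < λ_min(Q)/(2M), where λ_min(Q) is the smallest eigenvalue of Q. Suppose D ∈ D_blk and P is a symmetric positive definite matrix satisfying Aᵀ D P + P D A = −Q and ‖P D‖ ≤ M. Then for every n×n real matrix B with ‖B‖ ≤ μ, the matrix D(A + B) is Hurwitz. -/
open Matrix

/-!
Write `D` for the block-diagonal scaling and `S = D (A + B)`. Since `D` and `P` are symmetric,
`Sᵀ P + P S = -(Q - (Tᵀ + T))` with `T = P D B`, and `‖T‖ ≤ ‖P D‖ ‖B‖ ≤ M μ < λ_min(Q) / 2`, so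
`Q - (Tᵀ + T)` is still positive definite. Lyapunov's argument then applies to `S`: for a complex
eigenpair `S v = c v`, the identity gives `2 (Re c) v* P v = -v* (Q - (Tᵀ + T)) v < 0`.
-/

open scoped ComplexOrder MatrixOrder

section

variable {m : Type*} [Fintype m]

namespace Matrix

lemma star_dotProduct_map_ofReal_mulVec {R : Matrix m m ℝ} (hR : R.IsSymm) (v : m → ℂ) :
    star v ⬝ᵥ (R.map Complex.ofReal *ᵥ v) =
      ↑((Complex.re ∘ v) ⬝ᵥ (R *ᵥ (Complex.re ∘ v)) +
        (Complex.im ∘ v) ⬝ᵥ (R *ᵥ (Complex.im ∘ v))) := by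
  set x := Complex.re ∘ v
  set y := Complex.im ∘ v
  have hv : v = Complex.ofReal ∘ x + Complex.I • (Complex.ofReal ∘ y) := by
    funext i
    rw [Pi.add_apply, Pi.smul_apply, smul_eq_mul, mul_comm]
    exact (Complex.re_add_im _).symm
  have hstar (a : m → ℝ) : star (Complex.ofReal ∘ a) = Complex.ofReal ∘ a :=
    funext fun i ↦ Complex.conj_ofReal (a i)
  have hform (a b : m → ℝ) : (Complex.ofReal ∘ a) ⬝ᵥ (R.map Complex.ofReal *ᵥ (Complex.ofReal ∘ b))
      = ↑(a ⬝ᵥ (R *ᵥ b)) := by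
    simp [dotProduct, mulVec, Complex.ofReal_sum]
  have hsymm : x ⬝ᵥ (R *ᵥ y) = y ⬝ᵥ (R *ᵥ x) := by
    rw [dotProduct_mulVec, ← mulVec_transpose, hR.eq, dotProduct_comm]
  rw [hv, star_add, star_smul, hstar, hstar, mulVec_add, mulVec_smul]
  simp only [dotProduct_add, add_dotProduct, dotProduct_smul, smul_dotProduct, hform, smul_eq_mul,
    hsymm, Complex.star_def, Complex.conj_I]
  push_cast
  linear_combination (-↑(y ⬝ᵥ R *ᵥ y) : ℂ) * Complex.I_sq

lemma PosDef.map_ofReal {R : Matrix m m ℝ} (hR : R.PosDef) : (R.map Complex.ofReal).PosDef := by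
  refine .of_dotProduct_mulVec_pos (hR.1.map _ fun _ ↦ (Complex.conj_ofReal _).symm) fun v hv ↦ ?_
  rw [star_dotProduct_map_ofReal_mulVec (isHermitian_iff_isSymm.mp hR.1), Complex.zero_lt_real]
  have hpos {a : m → ℝ} (ha : a ≠ 0) : 0 < a ⬝ᵥ (R *ᵥ a) := by
    simpa using hR.dotProduct_mulVec_pos ha
  have hnonneg (a : m → ℝ) : 0 ≤ a ⬝ᵥ (R *ᵥ a) := by
    simpa using hR.posSemidef.dotProduct_mulVec_nonneg a
  by_cases hx : Complex.re ∘ v = 0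
  · have hy : Complex.im ∘ v ≠ 0 := fun hy ↦
      hv <| funext fun i ↦ Complex.ext (congrFun hx i) (congrFun hy i)
    linarith [hnonneg (Complex.re ∘ v), hpos hy]
  · linarith [hpos hx, hnonneg (Complex.im ∘ v)]

lemma re_lt_zero_of_lyapunov {S P Q : Matrix m m ℂ} (hP : P.PosDef) (hQ : Q.PosDef)
    (hlyap : Sᴴ * P + P * S = -Q) {c : ℂ} {v : m → ℂ} (hv : v ≠ 0) (hSv : S *ᵥ v = c • v) :
    c.re < 0 := by
  set p := star v ⬝ᵥ (P *ᵥ v)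
  have hform : star v ⬝ᵥ ((Sᴴ * P + P * S) *ᵥ v) = (2 * c.re : ℝ) * p := by
    rw [add_mulVec, dotProduct_add, ← mulVec_mulVec, ← mulVec_mulVec, dotProduct_mulVec,
      ← star_mulVec, hSv, star_smul, smul_dotProduct, mulVec_smul, dotProduct_smul,
      smul_eq_mul, smul_eq_mul, ← add_mul, add_comm, Complex.star_def, Complex.add_conj]
  have hneg : ((2 * c.re : ℝ) * p).re < 0 := by
    rw [← hform, hlyap, neg_mulVec, dotProduct_neg, Complex.neg_re, neg_lt_zero]
    exact (Complex.pos_iff.mp (hQ.dotProduct_mulVec_pos hv)).1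
  rw [Complex.re_ofReal_mul] at hneg
  have := neg_of_mul_neg_left hneg (Complex.pos_iff.mp (hP.dotProduct_mulVec_pos hv)).1.le
  linarith

lemma exists_mulVec_eq_smul_of_mem_spectrum [DecidableEq m] {K : Type*} [Field K]
    {S : Matrix m m K} {c : K} (hc : c ∈ spectrum K S) : ∃ v ≠ 0, S *ᵥ v = c • v := by
  rw [← spectrum_toLin', ← Module.End.hasEigenvalue_iff_mem_spectrum] at hc
  obtain ⟨v, hv⟩ := hc.exists_hasEigenvector
  exact ⟨v, hv.2, by simpa using hv.apply_eq_smul⟩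

end Matrix

variable [DecidableEq m]

theorem isHurwitz_of_lyapunov {S P Q : Matrix m m ℝ} (hP : P.PosDef) (hQ : Q.PosDef)
    (hlyap : Sᵀ * P + P * S = -Q) : IsHurwitz S := by
  intro c hc
  rw [Complex.coe_algebraMap] at hc
  obtain ⟨v, hv, hSv⟩ := exists_mulVec_eq_smul_of_mem_spectrum hc
  have hS : (S.map Complex.ofReal)ᴴ = Sᵀ.map Complex.ofReal := by ext i j; simp
  have hlyapℂ := congrArg (Complex.ofRealHom.mapMatrix (m := m)) hlyap
  simp only [map_add, map_mul, map_neg, RingHom.mapMatrix_apply] at hlyapℂ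
  exact re_lt_zero_of_lyapunov hP.map_ofReal hQ.map_ofReal (hS ▸ hlyapℂ) hv hSv

lemma dotProduct_mulVec_le_opNorm2 (T : Matrix m m ℝ) (x : m → ℝ) :
    x ⬝ᵥ (T *ᵥ x) ≤ opNorm2 T * (x ⬝ᵥ x) := by
  set T' := toEuclideanCLM (𝕜 := ℝ) T
  set x' : EuclideanSpace ℝ m := WithLp.toLp 2 x
  have hinner : x ⬝ᵥ (T *ᵥ x) = inner ℝ x' (T' x') := by
    simp [T', x', EuclideanSpace.inner_eq_star_dotProduct, dotProduct_comm]
  have hnorm : x ⬝ᵥ x = ‖x'‖ ^ 2 := by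
    rw [← real_inner_self_eq_norm_sq, EuclideanSpace.inner_eq_star_dotProduct]
    simp [x']
  rw [hinner, hnorm]
  calc inner ℝ x' (T' x') ≤ ‖x'‖ * ‖T' x'‖ := real_inner_le_norm _ _
    _ ≤ ‖x'‖ * (‖T'‖ * ‖x'‖) := by gcongr; exact T'.le_opNorm x'
    _ = opNorm2 T * ‖x'‖ ^ 2 := by rw [opNorm2]; ring

lemma opNorm2_mul_le (S T : Matrix m m ℝ) : opNorm2 (S * T) ≤ opNorm2 S * opNorm2 T := by
  rw [opNorm2, opNorm2, opNorm2, map_mul]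
  exact norm_mul_le _ _

namespace Matrix

lemma IsHermitian.iInf_eigenvalues_mul_dotProduct_self_le {Q : Matrix m m ℝ}
    (hQ : Q.IsHermitian) (x : m → ℝ) : (⨅ i, hQ.eigenvalues i) * (x ⬝ᵥ x) ≤ x ⬝ᵥ (Q *ᵥ x) := by
  have hle : algebraMap ℝ (Matrix m m ℝ) (⨅ i, hQ.eigenvalues i) ≤ Q := by
    refine algebraMap_le_of_le_spectrum (fun r hr ↦ ?_) hQ
    rw [hQ.spectrum_real_eq_range_eigenvalues] at hr
    obtain ⟨i, rfl⟩ := hr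
    exact ciInf_le (Set.finite_range _).bddBelow i
  have := (le_iff.mp hle).dotProduct_mulVec_nonneg x
  rwa [star_trivial, sub_mulVec, dotProduct_sub, Algebra.algebraMap_eq_smul_one, smul_mulVec,
    one_mulVec, dotProduct_smul, smul_eq_mul, sub_nonneg] at this

lemma PosDef.sub_add_transpose_of_two_mul_opNorm2_lt {Q T : Matrix m m ℝ} (hQ : Q.PosDef)
    (hT : 2 * opNorm2 T < ⨅ i, hQ.1.eigenvalues i) : (Q - (Tᵀ + T)).PosDef := by
  refine .of_dotProduct_mulVec_pos
    (hQ.1.sub (isHermitian_iff_isSymm.mpr (isSymm_transpose_add_self T))) fun x hx ↦ ?_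
  have hx2 : 0 < x ⬝ᵥ x := by simpa using PosDef.one.dotProduct_mulVec_pos hx
  have hTx : x ⬝ᵥ (Tᵀ *ᵥ x) = x ⬝ᵥ (T *ᵥ x) := by
    rw [dotProduct_mulVec, vecMul_transpose, dotProduct_comm]
  rw [star_trivial, sub_mulVec, dotProduct_sub, add_mulVec, dotProduct_add, hTx]
  nlinarith [hQ.1.iInf_eigenvalues_mul_dotProduct_self_le x, dotProduct_mulVec_le_opNorm2 T x]

end Matrix

end

theorem hurwitz_of_small_perturbation_of_lyapunov_general
    (N : ℕ) (n : Fin N → ℕ)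
    (A Q : Matrix ((i : Fin N) × Fin (n i)) ((i : Fin N) × Fin (n i)) ℝ)
    (hQ : Q.PosDef) (M : ℝ) (hM : 0 < M) (μ : ℝ)
    (hμ : μ < (⨅ p, hQ.1.eigenvalues p) / (2 * M))
    (d : Fin N → ℝ)
    (P : Matrix ((i : Fin N) × Fin (n i)) ((i : Fin N) × Fin (n i)) ℝ)
    (hP : P.PosDef)
    (hLyap : Aᵀ * Matrix.diagonal (fun p => d p.1) * P
        + P * Matrix.diagonal (fun p => d p.1) * A = -Q)
    (hbound : opNorm2 (P * Matrix.diagonal (fun p => d p.1)) ≤ M) :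
    ∀ B : Matrix ((i : Fin N) × Fin (n i)) ((i : Fin N) × Fin (n i)) ℝ,
      opNorm2 B ≤ μ →
        IsHurwitz (Matrix.diagonal (fun p => d p.1) * (A + B)) := by
  intro B hB
  set D : Matrix ((i : Fin N) × Fin (n i)) ((i : Fin N) × Fin (n i)) ℝ :=
    Matrix.diagonal (fun p => d p.1)
  have hPt : Pᵀ = P := (isHermitian_iff_isSymm.mp hP.1).eq
  have hlyap : (D * (A + B))ᵀ * P + P * (D * (A + B)) = -(Q - ((P * D * B)ᵀ + P * D * B)) := by
    rw [← neg_eq_iff_eq_neg.mpr hLyap]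
    simp only [transpose_mul, transpose_add, hPt, D, diagonal_transpose]
    noncomm_ring
  have hsmall : 2 * opNorm2 (P * D * B) < ⨅ p, hQ.1.eigenvalues p :=
    calc 2 * opNorm2 (P * D * B) ≤ 2 * (M * μ) := by
          gcongr
          exact (opNorm2_mul_le _ _).trans (mul_le_mul hbound hB (norm_nonneg _) hM.le)
      _ < ⨅ p, hQ.1.eigenvalues p := by
          rw [lt_div_iff₀ (by positivity)] at hμ
          linarith
  exact isHurwitz_of_lyapunov hP (hQ.sub_add_transpose_of_two_mul_opNorm2_lt hsmall) hlyap

theorem hurwitz_of_small_perturbation_of_lyapunov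
    (N : ℕ) (hN : 0 < N) (n : Fin N → ℕ) (hn : ∀ i, 0 < n i)
    (A Q : Matrix ((i : Fin N) × Fin (n i)) ((i : Fin N) × Fin (n i)) ℝ)
    (hQ : Q.PosDef) (M : ℝ) (hM : 0 < M) (μ : ℝ) (hμ0 : 0 < μ)
    (hμ : μ < (⨅ p, hQ.1.eigenvalues p) / (2 * M))
    (d : Fin N → ℝ) (hd : ∀ i, 0 < d i)
    (P : Matrix ((i : Fin N) × Fin (n i)) ((i : Fin N) × Fin (n i)) ℝ)
    (hP : P.PosDef)
    (hLyap : Aᵀ * Matrix.diagonal (fun p => d p.1) * P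
        + P * Matrix.diagonal (fun p => d p.1) * A = -Q)
    (hbound : opNorm2 (P * Matrix.diagonal (fun p => d p.1)) ≤ M) :
    ∀ B : Matrix ((i : Fin N) × Fin (n i)) ((i : Fin N) × Fin (n i)) ℝ,
      opNorm2 B ≤ μ →
        IsHurwitz (Matrix.diagonal (fun p => d p.1) * (A + B)) :=
  hurwitz_of_small_perturbation_of_lyapunov_general N n A Q hQ M hM μ hμ d P hP hLyap hbound
end

section
/- If an n×n block-partitioned real matrix A is robustly block D-stable, then for every D̃ ∈ D_blk the matrix A D̃ is robustly block D-stable (with respect to the same block partition). -/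
open Matrix

lemma opNorm2_mul_le_s7 {m : Type*} [Fintype m] [DecidableEq m] (M N : Matrix m m ℝ) :
    opNorm2 (M * N) ≤ opNorm2 M * opNorm2 N := by
  unfold opNorm2
  rw [_root_.map_mul]
  exact norm_mul_le _ _

theorem robust_block_D_stable_mul_right_blkdiag
    (N : ℕ) (hN : 0 < N) (n : Fin N → ℕ) (hn : ∀ i, 0 < n i)
    (A : Matrix ((i : Fin N) × Fin (n i)) ((i : Fin N) × Fin (n i)) ℝ)
    (hA : RobustBlockDStable A)
    (d : Fin N → ℝ) (hd : ∀ i, 0 < d i) :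
    RobustBlockDStable (A * Matrix.diagonal (fun p => d p.1)) := by
  obtain ⟨μ, hμ, hμA⟩ := hA
  set D : Matrix ((i : Fin N) × Fin (n i)) ((i : Fin N) × Fin (n i)) ℝ :=
    Matrix.diagonal (fun p => d p.1) with hD
  set Dinv : Matrix ((i : Fin N) × Fin (n i)) ((i : Fin N) × Fin (n i)) ℝ :=
    Matrix.diagonal (fun p => (d p.1)⁻¹) with hDinv
  have hdne : ∀ i, d i ≠ 0 := fun i => (hd i).ne'
  have hDinvD : Dinv * D = 1 := by
    rw [hDinv, hD, Matrix.diagonal_mul_diagonal]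
    convert Matrix.diagonal_one using 2
    exact funext fun p => inv_mul_cancel₀ (hdne p.1)
  have hDDinv : D * Dinv = 1 := by
    rw [hDinv, hD, Matrix.diagonal_mul_diagonal]
    convert Matrix.diagonal_one using 2
    exact funext fun p => mul_inv_cancel₀ (hdne p.1)
  set c := opNorm2 Dinv with hc
  have hc0 : 0 ≤ c := norm_nonneg _
  refine ⟨μ / (c + 1), by positivity, fun B hB e he => ?_⟩
  -- key matrix identity
  have key : Matrix.diagonal (fun p => e p.1) * (A * D + B) =
      Dinv * (Matrix.diagonal (fun p : (i : Fin N) × Fin (n i) => d p.1 * e p.1) *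
        (A + B * Dinv)) * D := by
    have h1 : Matrix.diagonal (fun p : (i : Fin N) × Fin (n i) => d p.1 * e p.1) =
        D * Matrix.diagonal (fun p => e p.1) := by
      rw [hD, Matrix.diagonal_mul_diagonal]
    rw [h1]
    rw [show Dinv * (D * Matrix.diagonal (fun p : (i : Fin N) × Fin (n i) => e p.1) *
        (A + B * Dinv)) * D = (Dinv * D) *
        (Matrix.diagonal (fun p => e p.1) * ((A + B * Dinv) * D)) by
      simp only [mul_assoc]]
    rw [hDinvD, one_mul, add_mul, mul_assoc B, hDinvD, mul_one]
  -- apply hA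
  have hBnorm : opNorm2 (B * Dinv) ≤ μ := by
    calc opNorm2 (B * Dinv) ≤ opNorm2 B * c := opNorm2_mul_le_s7 _ _
    _ ≤ (μ / (c + 1)) * (c + 1) := by
        apply mul_le_mul hB (by linarith) hc0
        positivity
    _ = μ := div_mul_cancel₀ _ (by positivity)
  have hde : ∀ i, 0 < d i * e i := fun i => mul_pos (hd i) (he i)
  have hH := hμA (B * Dinv) hBnorm (fun i => d i * e i) hde
  -- transport Hurwitz through conjugation
  intro z hz
  apply hH z
  have hmap : (Matrix.diagonal (fun p : (i : Fin N) × Fin (n i) => e p.1) *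
      (A * D + B)).map (algebraMap ℝ ℂ) =
      Dinv.map (algebraMap ℝ ℂ) *
      ((Matrix.diagonal (fun p : (i : Fin N) × Fin (n i) => d p.1 * e p.1) *
        (A + B * Dinv)).map (algebraMap ℝ ℂ)) * D.map (algebraMap ℝ ℂ) := by
    rw [key, Matrix.map_mul, Matrix.map_mul]
  rw [hmap] at hz
  set u : (Matrix ((i : Fin N) × Fin (n i)) ((i : Fin N) × Fin (n i)) ℂ)ˣ :=
    ⟨D.map (algebraMap ℝ ℂ), Dinv.map (algebraMap ℝ ℂ),
      by rw [← Matrix.map_mul, hDDinv, Matrix.map_one _ (map_zero _) (map_one _)],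
      by rw [← Matrix.map_mul, hDinvD, Matrix.map_one _ (map_zero _) (map_one _)]⟩ with hu
  have : (u⁻¹ : _).1 = Dinv.map (algebraMap ℝ ℂ) := rfl
  rw [← this, show D.map (algebraMap ℝ ℂ) = (u : Matrix _ _ ℂ) from rfl] at hz
  rwa [spectrum.units_conjugate'] at hz
end

section
/- Let (d^k)_{k∈ℕ} be any sequence of N-tuples of positive reals, d^k = (d_1^k,…,d_N^k). Then, after passing to a subsequence, there exist an integer 1 ≤ N̄ ≤ N, a partition of {1,…,N} into nonempty sets Λ_1,…,Λ_{N̄}, positive reals τ_ℓ^k for each ℓ ∈ {1,…,N̄} and each k, and a constant c ≥ 1 such that: (i) for every ℓ ∈ {1,…,N̄}, every j ∈ Λ_ℓ, and every k, 1/c ≤ d_j^k / τ_ℓ^k ≤ c; and (ii) for all ℓ, m ∈ {1,…,N̄}, the ratio τ_ℓ^k / τ_m^k converges to 0 as k → ∞ if and only if ℓ > m. -/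
open Filter Topology

theorem block_scaling_sequence_decomposition
    (N : ℕ) (hN : 0 < N) (d : ℕ → Fin N → ℝ) (hd : ∀ k i, 0 < d k i) :
    ∃ φ : ℕ → ℕ, StrictMono φ ∧
      ∃ Nbar : ℕ, 1 ≤ Nbar ∧ Nbar ≤ N ∧
        ∃ Λ : Fin Nbar → Finset (Fin N),
          -- `Λ 0, …, Λ (Nbar-1)` is a partition of `{1,…,N}` into nonempty sets
          (∀ ℓ, (Λ ℓ).Nonempty) ∧
          (∀ ℓ m : Fin Nbar, ℓ ≠ m → Disjoint (Λ ℓ) (Λ m)) ∧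
          (∀ i : Fin N, ∃ ℓ, i ∈ Λ ℓ) ∧
          ∃ τ : Fin Nbar → ℕ → ℝ, (∀ ℓ k, 0 < τ ℓ k) ∧
            ∃ c : ℝ, 1 ≤ c ∧
              -- (i) each entry is comparable to the scale of its class
              (∀ ℓ : Fin Nbar, ∀ j ∈ Λ ℓ, ∀ k : ℕ,
                1 / c ≤ d (φ k) j / τ ℓ k ∧ d (φ k) j / τ ℓ k ≤ c) ∧
              -- (ii) the scales are strictly ordered by rates of decay
              (∀ ℓ m : Fin Nbar,
                Tendsto (fun k => τ ℓ k / τ m k) atTop (𝓝 0) ↔ m < ℓ) := by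
  classical
  obtain ⟨L, φ, hφ, hL⟩ := CompactSpace.tendsto_subseq
    (fun k (p : Fin N × Fin N) => ENNReal.ofReal (d k p.1 / d k p.2))
  refine ⟨φ, hφ, ?_⟩
  have hpos : ∀ k i j, (0:ℝ) < d (φ k) i / d (φ k) j :=
    fun k i j => div_pos (hd _ _) (hd _ _)
  have hconv : ∀ i j : Fin N,
      Tendsto (fun k => ENNReal.ofReal (d (φ k) i / d (φ k) j)) atTop (𝓝 (L (i, j))) := by
    intro i j
    have := tendsto_pi_nhds.1 hL (i, j)
    simpa [Function.comp] using this
  -- diagonal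
  have hdiag : ∀ i, L (i, i) = 1 := by
    intro i
    have h1 : Tendsto (fun k => ENNReal.ofReal (d (φ k) i / d (φ k) i)) atTop (𝓝 1) := by
      have : (fun k => ENNReal.ofReal (d (φ k) i / d (φ k) i)) = fun _ => 1 := by
        funext k; rw [div_self (hd _ _).ne', ENNReal.ofReal_one]
      rw [this]; exact tendsto_const_nhds
    exact tendsto_nhds_unique (hconv i i) h1
  -- inverse
  have hinv : ∀ i j, L (j, i) = (L (i, j))⁻¹ := by
    intro i j
    have h1 : Tendsto (fun k => (ENNReal.ofReal (d (φ k) i / d (φ k) j))⁻¹) atTop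
        (𝓝 (L (i, j))⁻¹) := (hconv i j).inv
    have h2 : (fun k => (ENNReal.ofReal (d (φ k) i / d (φ k) j))⁻¹)
        = fun k => ENNReal.ofReal (d (φ k) j / d (φ k) i) := by
      funext k
      rw [← ENNReal.ofReal_inv_of_pos (hpos k i j), inv_div]
    rw [h2] at h1
    exact tendsto_nhds_unique (hconv j i) h1
  -- multiplication
  have hmul : ∀ i j k : Fin N, (L (i, j) ≠ 0 ∨ L (j, k) ≠ ⊤) → (L (j, k) ≠ 0 ∨ L (i, j) ≠ ⊤) →
      L (i, k) = L (i, j) * L (j, k) := by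
    intro i j k h1 h2
    have hm : Tendsto (fun n => ENNReal.ofReal (d (φ n) i / d (φ n) j)
        * ENNReal.ofReal (d (φ n) j / d (φ n) k)) atTop (𝓝 (L (i, j) * L (j, k))) :=
      ENNReal.Tendsto.mul (hconv i j) h1 (hconv j k) h2
    have he : (fun n => ENNReal.ofReal (d (φ n) i / d (φ n) j)
        * ENNReal.ofReal (d (φ n) j / d (φ n) k))
        = fun n => ENNReal.ofReal (d (φ n) i / d (φ n) k) := by
      funext n
      rw [← ENNReal.ofReal_mul (hpos n i j).le]
      congr 1
      rw [div_mul_div_comm, mul_comm (d (φ n) i) (d (φ n) j),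
        mul_div_mul_left _ _ (hd (φ n) j).ne']
    rw [he] at hm
    exact tendsto_nhds_unique (hconv i k) hm
  -- real limits
  have htend : ∀ i j, L (i, j) ≠ ⊤ →
      Tendsto (fun k => d (φ k) i / d (φ k) j) atTop (𝓝 (L (i, j)).toReal) := by
    intro i j h
    have h1 := (ENNReal.tendsto_toReal h).comp (hconv i j)
    refine h1.congr fun k => ?_
    exact ENNReal.toReal_ofReal (hpos k i j).le
  have hzero : ∀ i j, Tendsto (fun k => d (φ k) i / d (φ k) j) atTop (𝓝 0) ↔ L (i, j) = 0 := by
    intro i j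
    constructor
    · intro h
      have h2 : Tendsto (fun k => ENNReal.ofReal (d (φ k) i / d (φ k) j)) atTop
          (𝓝 (ENNReal.ofReal 0)) := (ENNReal.continuous_ofReal.tendsto 0).comp h
      have := tendsto_nhds_unique (hconv i j) h2
      simpa using this
    · intro h
      have := htend i j (by simp [h])
      simpa [h] using this
  -- infinity
  have hinfty : ∀ i j, L (i, j) = ⊤ ↔ L (j, i) = 0 := by
    intro i j
    rw [hinv i j, ENNReal.inv_eq_zero]
  -- rank
  set S : Fin N → Finset (Fin N) := fun i => Finset.univ.filter (fun j => L (i, j) = 0) with hS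
  set rank : Fin N → ℕ := fun i => (S i).card with hrank
  have hself : ∀ i, i ∉ S i := by
    intro i hi
    rw [hS] at hi
    simp only [Finset.mem_filter] at hi
    rw [hdiag i] at hi
    exact one_ne_zero hi.2
  have hsub : ∀ i j, L (i, j) = 0 → S j ⊂ S i := by
    intro i j h0
    constructor
    · intro k hk
      simp only [hS, Finset.mem_filter, Finset.mem_univ, true_and] at hk ⊢
      have := hmul i j k (Or.inr (by simp [hk])) (Or.inr (by simp [h0]))
      rw [this, hk, mul_zero]
    · intro hsub'
      have hj : j ∈ S i := by
        simp only [hS, Finset.mem_filter, Finset.mem_univ, true_and]; exact h0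
      exact hself j (hsub' hj)
  have hsub' : ∀ i j, L (i, j) = 0 → rank j < rank i := by
    intro i j h0
    exact Finset.card_lt_card (hsub i j h0)
  have heq : ∀ i j, L (i, j) ≠ 0 → L (i, j) ≠ ⊤ → S i = S j := by
    have key : ∀ i j, L (i, j) ≠ 0 → L (i, j) ≠ ⊤ → S j ⊆ S i := by
      intro i j h0 ht k hk
      simp only [hS, Finset.mem_filter, Finset.mem_univ, true_and] at hk ⊢
      have := hmul i j k (Or.inl h0) (Or.inr ht)
      rw [this, hk, mul_zero]
    intro i j h0 ht
    refine le_antisymm ?_ (key i j h0 ht)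
    have h0' : L (j, i) ≠ 0 := by rw [hinv]; simp [ht]
    have ht' : L (j, i) ≠ ⊤ := by rw [hinv]; simp [h0]
    exact key j i h0' ht'
  have heq' : ∀ i j, L (i, j) ≠ 0 → L (i, j) ≠ ⊤ → rank i = rank j := by
    intro i j h0 ht
    show (S i).card = (S j).card
    rw [heq i j h0 ht]
  -- rank characterizations
  have hlt_iff : ∀ i j, rank i < rank j ↔ L (j, i) = 0 := by
    intro i j
    constructor
    · intro h
      by_contra h0
      rcases eq_or_ne (L (j, i)) ⊤ with ht | ht
      · have := hsub' i j ((hinfty j i).1 ht)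
        omega
      · have := heq' j i h0 ht
        omega
    · intro h0
      exact hsub' j i h0
  have heq_iff : ∀ i j, rank i = rank j ↔ (L (i, j) ≠ 0 ∧ L (i, j) ≠ ⊤) := by
    intro i j
    constructor
    · intro h
      constructor
      · intro h0
        have := hsub' i j h0; omega
      · intro ht
        have := hsub' j i ((hinfty i j).1 ht); omega
    · intro ⟨h0, ht⟩
      exact heq' i j h0 ht
  -- the partition
  set T : Finset ℕ := Finset.univ.image rank with hT
  have hTne : T.Nonempty := ⟨rank ⟨0, hN⟩, Finset.mem_image_of_mem _ (Finset.mem_univ _)⟩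
  refine ⟨T.card, Finset.card_pos.2 hTne, le_trans (Finset.card_image_le) (by simp), ?_⟩
  set e := T.orderIsoOfFin rfl with he
  set Λ : Fin T.card → Finset (Fin N) :=
    fun ℓ => Finset.univ.filter (fun i => rank i = (e ℓ : ℕ)) with hΛ
  have hΛmem : ∀ ℓ i, i ∈ Λ ℓ ↔ rank i = (e ℓ : ℕ) := by
    intro ℓ i; simp [hΛ]
  have hne : ∀ ℓ, (Λ ℓ).Nonempty := by
    intro ℓ
    have : ((e ℓ : ℕ)) ∈ T := (e ℓ).2
    obtain ⟨i, _, hi⟩ := Finset.mem_image.1 this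
    exact ⟨i, (hΛmem ℓ i).2 hi⟩
  refine ⟨Λ, hne, ?_, ?_, ?_⟩
  · intro ℓ m hlm
    rw [Finset.disjoint_left]
    intro i hi hi'
    rw [hΛmem] at hi hi'
    exact hlm (e.injective (Subtype.coe_injective (hi.symm.trans hi')))
  · intro i
    have hmem : rank i ∈ T := Finset.mem_image_of_mem _ (Finset.mem_univ _)
    refine ⟨e.symm ⟨rank i, hmem⟩, (hΛmem _ i).2 ?_⟩
    rw [OrderIso.apply_symm_apply]
  -- scales
  set rep : Fin T.card → Fin N := fun ℓ => (hne ℓ).choose with hrep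
  have hrepmem : ∀ ℓ, rank (rep ℓ) = (e ℓ : ℕ) := fun ℓ => (hΛmem ℓ _).1 (hne ℓ).choose_spec
  refine ⟨fun ℓ k => d (φ k) (rep ℓ), fun ℓ k => hd _ _, ?_⟩
  -- the constant
  set M : Fin N → Fin N → ℝ := fun i j => sSup (Set.range fun k => d (φ k) i / d (φ k) j) with hM
  have hMbound : ∀ i j, rank i = rank j → ∀ k, d (φ k) i / d (φ k) j ≤ M i j := by
    intro i j hij k
    obtain ⟨h0, ht⟩ := (heq_iff i j).1 hij
    have hb : BddAbove (Set.range fun k => d (φ k) i / d (φ k) j) :=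
      (htend i j ht).bddAbove_range
    exact le_csSup hb (Set.mem_range_self k)
  have huniv : (Finset.univ : Finset (Fin N × Fin N)).Nonempty :=
    ⟨(⟨0, hN⟩, ⟨0, hN⟩), Finset.mem_univ _⟩
  set c : ℝ := max 1 (Finset.univ.sup' huniv fun p : Fin N × Fin N => M p.1 p.2) with hc
  have hc1 : (1:ℝ) ≤ c := le_max_left _ _
  have hcM : ∀ i j, M i j ≤ c :=
    fun i j => le_trans (Finset.le_sup' (fun p : Fin N × Fin N => M p.1 p.2) (Finset.mem_univ (i, j))) (le_max_right _ _)
  have hub : ∀ i j, rank i = rank j → ∀ k, d (φ k) i / d (φ k) j ≤ c :=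
    fun i j hij k => le_trans (hMbound i j hij k) (hcM i j)
  refine ⟨c, hc1, ?_, ?_⟩
  · intro ℓ j hj k
    have hjr : rank j = rank (rep ℓ) := by
      rw [(hΛmem ℓ j).1 hj, hrepmem]
    constructor
    · have h1 : d (φ k) (rep ℓ) / d (φ k) j ≤ c := hub _ _ hjr.symm k
      have h2 : 1 / c ≤ 1 / (d (φ k) (rep ℓ) / d (φ k) j) :=
        one_div_le_one_div_of_le (hpos k _ _) h1
      rwa [one_div_div] at h2
    · exact hub _ _ hjr k
  · intro ℓ m
    rw [hzero, ← hlt_iff, hrepmem, hrepmem]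
    constructor
    · intro h
      exact e.lt_iff_lt.1 (Subtype.coe_lt_coe.1 h)
    · intro h
      exact Subtype.coe_lt_coe.2 (e.lt_iff_lt.2 h)
end

section
/- If an n×n block-partitioned real matrix A is block diagonally stable, i.e., there exists a symmetric positive definite matrix P = blkdiag(P_1,…,P_N), with P_i of size n_i×n_i, such that Aᵀ P + P A is negative definite, then A is robustly block D-stable. -/
/-!
A block-diagonal Lyapunov matrix `P` survives both operations in the definition of robust block
D-stability. Negative definiteness of `Aᵀ P + P A` is an open condition, so it persists for
`A + B` with `‖B‖` small. And `P` commutes with every scaling `D = blkdiag (d₁ I, …, d_N I)`, so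
`Q = P D⁻¹` is positive definite and `(D M)ᵀ Q + Q (D M) = Mᵀ P + P M`: the same Lyapunov
inequality certifies that `D (A + B)` is Hurwitz.
-/

open Matrix

open scoped MatrixOrder ComplexOrder RealInnerProductSpace

theorem ContinuousLinearMap.exists_pos_mul_norm_sq_le_inner {E : Type*} [NormedAddCommGroup E]
    [InnerProductSpace ℝ E] [FiniteDimensional ℝ E] (T : E →L[ℝ] E)
    (hT : ∀ x ≠ 0, 0 < ⟪x, T x⟫) : ∃ c > 0, ∀ x, c * ‖x‖ ^ 2 ≤ ⟪x, T x⟫ := by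
  obtain ⟨c, hc, hcT⟩ := (isCompact_sphere (0 : E) 1).exists_forall_le'
    (f := fun x => ⟪x, T x⟫) (by fun_prop)
    fun x hx => hT x (ne_zero_of_mem_unit_sphere ⟨x, hx⟩)
  refine ⟨c, hc, fun x => ?_⟩
  rcases eq_or_ne x 0 with rfl | hx
  · simp
  have hnx : 0 < ‖x‖ := norm_pos_iff.mpr hx
  have := hcT (‖x‖⁻¹ • x) (by simp [norm_smul, hnx.ne'])
  rw [map_smul, real_inner_smul_left, real_inner_smul_right, ← mul_assoc, ← mul_inv,
    ← div_eq_inv_mul, le_div_iff₀ (by positivity)] at this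
  simpa [sq] using this

theorem Matrix.commute_diagonal_comp {m R : Type*} [Fintype m] [DecidableEq m] [CommRing R]
    [NoZeroDivisors R] {P : Matrix m m R} {d : m → R} (h : Commute P (diagonal d)) (f : R → R) :
    Commute P (diagonal (f ∘ d)) := by
  ext i j
  have hij : P i j * d j = d i * P i j := by simpa using congr_fun₂ h i j
  simp only [mul_diagonal, diagonal_mul, Function.comp_apply]
  by_cases hd : d i = d j
  · rw [hd, mul_comm]
  · have : P i j * (d j - d i) = 0 := by rw [mul_sub, hij, mul_comm, sub_self]
    simp [(mul_eq_zero.mp this).resolve_right (sub_ne_zero.mpr (Ne.symm hd))]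

theorem Matrix.commute_diagonal_fst {ι R : Type*} [Fintype ι] [DecidableEq ι] {κ : ι → Type*}
    [∀ i, Fintype (κ i)] [∀ i, DecidableEq (κ i)] [CommSemiring R]
    {P : Matrix (Σ i, κ i) (Σ i, κ i) R} (hP : ∀ p q : Σ i, κ i, p.1 ≠ q.1 → P p q = 0)
    (g : ι → R) : Commute P (diagonal fun p => g p.1) := by
  ext p q
  simp only [mul_diagonal, diagonal_mul]
  by_cases h : p.1 = q.1
  · rw [h, mul_comm]
  · simp [hP p q h]

theorem Matrix.exists_mulVec_eq_smul_of_mem_spectrum_s10 {m K : Type*} [Fintype m] [DecidableEq m]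
    [Field K] {M : Matrix m m K} {μ : K} (h : μ ∈ spectrum K M) : ∃ v ≠ 0, M *ᵥ v = μ • v := by
  rw [← spectrum_toLin', ← Module.End.hasEigenvalue_iff_mem_spectrum] at h
  obtain ⟨v, hv⟩ := h.exists_hasEigenvector
  exact ⟨v, hv.2, by simpa using hv.apply_eq_smul⟩

theorem Matrix.PosDef.mul_of_commute {m 𝕜 : Type*} [Fintype m] [DecidableEq m] [RCLike 𝕜]
    {A B : Matrix m m 𝕜} (hA : A.PosDef) (hB : B.PosDef) (h : Commute A B) : (A * B).PosDef :=
  ((hA.isStrictlyPositive.commute_iff hB.isStrictlyPositive).mp h).posDef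

variable {m : Type*} [Fintype m] [DecidableEq m]

theorem Matrix.PosDef.map_complex {S : Matrix m m ℝ} (hS : S.PosDef) :
    (S.map (algebraMap ℝ ℂ)).PosDef := by
  obtain ⟨R, hR, rfl⟩ :=
    CStarAlgebra.isStrictlyPositive_iff_eq_star_mul_self.mp hS.isStrictlyPositive
  rw [star_eq_conjTranspose, Matrix.map_mul, conjTranspose_map (algebraMap ℝ ℂ) fun x => by simp]
  exact PosDef.conjTranspose_mul_self _ <|
    mulVec_injective_iff_isUnit.mpr <| hR.map (algebraMap ℝ ℂ).mapMatrix

theorem Matrix.PosDef.exists_forall_posDef_sub {S : Matrix m m ℝ} (hS : S.PosDef) :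
    ∃ ε > 0, ∀ E : Matrix m m ℝ, E.IsHermitian → opNorm2 E < ε → (S - E).PosDef := by
  obtain ⟨c, hc, hcS⟩ := (toEuclideanCLM (𝕜 := ℝ) S).exists_pos_mul_norm_sq_le_inner
    fun y hy => by
      simpa [inner_toEuclideanCLM] using hS.dotProduct_mulVec_pos (x := y.ofLp) (by simpa using hy)
  refine ⟨c, hc, fun E hE hEc => .of_dotProduct_mulVec_pos (hS.1.sub hE) fun x hx => ?_⟩
  set y := WithLp.toLp 2 x
  have hy : 0 < ‖y‖ := by simpa [y] using hx
  have hSx : c * ‖y‖ ^ 2 ≤ x ⬝ᵥ S *ᵥ x := by simpa [inner_toEuclideanCLM] using hcS y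
  have hEx : x ⬝ᵥ E *ᵥ x ≤ opNorm2 E * ‖y‖ ^ 2 := calc
    x ⬝ᵥ E *ᵥ x = ⟪y, toEuclideanCLM (𝕜 := ℝ) E y⟫ := (inner_toEuclideanCLM E y y).symm
    _ ≤ ‖y‖ * (opNorm2 E * ‖y‖) := (real_inner_le_norm _ _).trans <| by
      gcongr; exact (toEuclideanCLM (𝕜 := ℝ) E).le_opNorm y
    _ = opNorm2 E * ‖y‖ ^ 2 := by ring
  rw [star_trivial, sub_mulVec, dotProduct_sub]
  nlinarith [mul_pos (sub_pos.2 hEc) (pow_pos hy 2)]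

open scoped Matrix.Norms.L2Operator in
theorem exists_forall_neg_lyapunov_add_posDef {A P : Matrix m m ℝ} (hP : P.IsHermitian)
    (hA : (-(Aᵀ * P + P * A)).PosDef) :
    ∃ μ > 0, ∀ B, opNorm2 B ≤ μ → (-((A + B)ᵀ * P + P * (A + B))).PosDef := by
  obtain ⟨ε, hε, hS⟩ := hA.exists_forall_posDef_sub
  have hPt : Pᵀ = P := by rw [← conjTranspose_eq_transpose_of_trivial, hP.eq]
  refine ⟨ε / (2 * (‖P‖ + 1)), by positivity, fun B hB => ?_⟩
  -- `opNorm2` is the norm of the scoped L2-operator-norm instance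
  have hB : ‖B‖ ≤ ε / (2 * (‖P‖ + 1)) := hB
  have hE : (Bᵀ * P + P * B).IsHermitian := by
    simp [IsHermitian, conjTranspose_eq_transpose_of_trivial, hPt, add_comm]
  have hEnorm : ‖Bᵀ * P + P * B‖ < ε := calc
    ‖Bᵀ * P + P * B‖ ≤ ‖Bᵀ‖ * ‖P‖ + ‖P‖ * ‖B‖ :=
      (norm_add_le _ _).trans (add_le_add (l2_opNorm_mul _ _) (l2_opNorm_mul _ _))
    _ = 2 * ‖P‖ * ‖B‖ := by
      rw [← conjTranspose_eq_transpose_of_trivial, l2_opNorm_conjTranspose]; ring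
    _ < ε := by
      rw [le_div_iff₀ (by positivity)] at hB
      nlinarith [norm_nonneg P, norm_nonneg B]
  convert hS _ hE hEnorm using 1
  simp only [transpose_add, add_mul, mul_add]
  abel

theorem isHurwitz_of_lyapunov_s10 {M Q : Matrix m m ℝ} (hQ : Q.PosDef)
    (h : (-(Mᵀ * Q + Q * M)).PosDef) : IsHurwitz M := by
  intro μ hμ
  obtain ⟨v, hv0, hv⟩ := exists_mulVec_eq_smul_of_mem_spectrum_s10 hμ
  obtain ⟨r, hr, hQv⟩ :=
    RCLike.pos_iff_exists_ofReal.mp (hQ.map_complex.dotProduct_mulVec_pos hv0)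
  have hmap : (-(Mᵀ * Q + Q * M)).map (algebraMap ℝ ℂ) = -((M.map (algebraMap ℝ ℂ))ᴴ *
      Q.map (algebraMap ℝ ℂ) + Q.map (algebraMap ℝ ℂ) * M.map (algebraMap ℝ ℂ)) := by
    simp only [← RingHom.mapMatrix_apply, map_neg, map_add, map_mul]
    simp only [RingHom.mapMatrix_apply, ← conjTranspose_eq_transpose_of_trivial]
    rw [conjTranspose_map (algebraMap ℝ ℂ) fun x => by simp]
  -- `v* (Mᴴ Q + Q M) v = (conj μ + μ) v* Q v = 2 (re μ) r`
  have key : star v ⬝ᵥ (-(Mᵀ * Q + Q * M)).map (algebraMap ℝ ℂ) *ᵥ v =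
      ((-(2 * μ.re * r) : ℝ) : ℂ) := by
    rw [hmap, neg_mulVec, add_mulVec, ← mulVec_mulVec, ← mulVec_mulVec, dotProduct_neg,
      dotProduct_add, dotProduct_mulVec, ← star_mulVec, hv, mulVec_smul, star_smul,
      smul_dotProduct, dotProduct_smul, ← hQv]
    apply Complex.ext <;> simp
    ring
  have := h.map_complex.dotProduct_mulVec_pos hv0
  rw [key, Complex.zero_lt_real] at this
  nlinarith

theorem isHurwitz_diagonal_mul_of_lyapunov {P M : Matrix m m ℝ} {d : m → ℝ} (hP : P.PosDef)
    (hd : ∀ i, 0 < d i) (hPd : Commute P (diagonal d)) (hM : (-(Mᵀ * P + P * M)).PosDef) :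
    IsHurwitz (diagonal d * M) := by
  have hdd : diagonal d * diagonal d⁻¹ = 1 := by simp [(hd _).ne']
  have hdd' : diagonal d⁻¹ * diagonal d = 1 := by simp [(hd _).ne']
  have hQ : (P * diagonal d⁻¹).PosDef := hP.mul_of_commute
    (posDef_diagonal_iff.mpr fun i => inv_pos.mpr (hd i)) (commute_diagonal_comp hPd Inv.inv)
  have hL : (diagonal d * M)ᵀ * (P * diagonal d⁻¹) + P * diagonal d⁻¹ * (diagonal d * M) =
      Mᵀ * P + P * M := by
    rw [transpose_mul, diagonal_transpose, mul_assoc, ← mul_assoc (diagonal d), ← hPd.eq,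
      mul_assoc, hdd, mul_one, mul_assoc, ← mul_assoc (diagonal d⁻¹), hdd', one_mul]
  exact isHurwitz_of_lyapunov_s10 hQ (hL ▸ hM)

theorem robust_block_D_stable_of_block_diagonal_stable_general
    (N : ℕ) (n : Fin N → ℕ)
    (A : Matrix ((i : Fin N) × Fin (n i)) ((i : Fin N) × Fin (n i)) ℝ)
    (P : Matrix ((i : Fin N) × Fin (n i)) ((i : Fin N) × Fin (n i)) ℝ)
    (hP : P.PosDef)
    -- `P = blkdiag (P_1, …, P_N)` is block diagonal
    (hPblk : ∀ p q : (i : Fin N) × Fin (n i), p.1 ≠ q.1 → P p q = 0)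
    -- `Aᵀ P + P A` is negative definite
    (hLyap : (-(Aᵀ * P + P * A)).PosDef) :
    RobustBlockDStable A := by
  obtain ⟨μ, hμ, hpert⟩ := exists_forall_neg_lyapunov_add_posDef hP.1 hLyap
  exact ⟨μ, hμ, fun B hB d hd => isHurwitz_diagonal_mul_of_lyapunov hP (fun p => hd p.1)
    (commute_diagonal_fst hPblk d) (hpert B hB)⟩

theorem robust_block_D_stable_of_block_diagonal_stable
    (N : ℕ) (hN : 0 < N) (n : Fin N → ℕ) (hn : ∀ i, 0 < n i)
    (A : Matrix ((i : Fin N) × Fin (n i)) ((i : Fin N) × Fin (n i)) ℝ)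
    (P : Matrix ((i : Fin N) × Fin (n i)) ((i : Fin N) × Fin (n i)) ℝ)
    (hP : P.PosDef)
    -- `P = blkdiag (P_1, …, P_N)` is block diagonal
    (hPblk : ∀ p q : (i : Fin N) × Fin (n i), p.1 ≠ q.1 → P p q = 0)
    -- `Aᵀ P + P A` is negative definite
    (hLyap : (-(Aᵀ * P + P * A)).PosDef) :
    RobustBlockDStable A :=
  robust_block_D_stable_of_block_diagonal_stable_general N n A P hP hPblk hLyap
end

section
/- The 2×2 real matrix A_0 = [[0, 1], [−1, −2]] is not robustly D-stable: for every μ > 0 there exists a 2×2 real matrix B with ‖B‖ ≤ μ (operator 2-norm) such that A_0 + B is not D-stable. -/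
open Matrix
set_option synthInstance.maxHeartbeats 1000000
set_option maxHeartbeats 1000000

lemma mem_spectrum_of_det_eq_zero {n : Type*} [Fintype n] [DecidableEq n]
    (N : Matrix n n ℂ) (z : ℂ) (h : (z • (1 : Matrix n n ℂ) - N).det = 0) :
    z ∈ spectrum ℂ N := by
  rw [spectrum.mem_iff, Algebra.algebraMap_eq_smul_one]
  intro hU
  exact absurd ((Matrix.isUnit_iff_isUnit_det _).mp hU) (by simp [h])


/-- A 2×2 real matrix is D-stable if `diag (d₁, d₂) * A` is Hurwitz for all
`d₁, d₂ > 0`. -/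
def DStable (A : Matrix (Fin 2) (Fin 2) ℝ) : Prop :=
  ∀ d₁ d₂ : ℝ, 0 < d₁ → 0 < d₂ → IsHurwitz (Matrix.diagonal ![d₁, d₂] * A)

theorem A0_not_robustly_D_stable :
    ∀ μ : ℝ, 0 < μ →
      ∃ B : Matrix (Fin 2) (Fin 2) ℝ, opNorm2 B ≤ μ ∧
        ¬ DStable (!![(0 : ℝ), 1; -1, -2] + B) := by
  intro μ hμ
  set ε := min μ (1/2) with hεdef
  have hε0 : 0 < ε := lt_min hμ (by norm_num)
  have hε2 : ε ≤ 1/2 := min_le_right _ _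
  refine ⟨ε • 1, ?_, ?_⟩
  · have : opNorm2 (ε • (1 : Matrix (Fin 2) (Fin 2) ℝ)) = ε := by
      unfold opNorm2
      rw [_root_.map_smul, _root_.map_one,
        norm_smul ε (1 : EuclideanSpace ℝ (Fin 2) →L[ℝ] EuclideanSpace ℝ (Fin 2)),
        norm_one, Real.norm_eq_abs, abs_of_pos hε0, mul_one]
    rw [this]
    exact min_le_left _ _
  · intro hD
    have h := hD (2 - ε) ε (by linarith) hε0
    set D := (2 - ε) * ε * (ε - 1) ^ 2 with hDdef
    have hDpos : 0 < D := by
      have h1 : (0:ℝ) < 2 - ε := by linarith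
      have h2 : (0:ℝ) < (ε - 1) ^ 2 := by
        have h3 : ε - 1 ≠ 0 := by intro h; linarith [h]
        exact pow_pos (abs_pos.mpr h3) 2 |>.trans_le (by rw [sq_abs])
      exact mul_pos (mul_pos h1 hε0) h2
    set z : ℂ := Complex.I * Real.sqrt D with hzdef
    have hM : Matrix.diagonal ![2 - ε, ε] * (!![(0 : ℝ), 1; -1, -2] + ε • 1)
        = !![(2 - ε) * ε, 2 - ε; -ε, ε * (ε - 2)] := by
      ext i j
      fin_cases i <;> fin_cases j <;>
        simp [Matrix.mul_apply, Fin.sum_univ_two, Matrix.one_apply] <;> ring_nf <;> tauto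
    have hz : z ∈ spectrum ℂ ((Matrix.diagonal ![2 - ε, ε] *
        (!![(0 : ℝ), 1; -1, -2] + ε • 1)).map (algebraMap ℝ ℂ)) := by
      rw [hM]
      apply mem_spectrum_of_det_eq_zero
      have hdet : (z • (1 : Matrix (Fin 2) (Fin 2) ℂ)
          - (!![(2 - ε) * ε, 2 - ε; -ε, ε * (ε - 2)]).map (algebraMap ℝ ℂ)).det
          = z ^ 2 + (D : ℂ) := by
        rw [Matrix.det_fin_two, hDdef]
        simp [Matrix.one_apply, Matrix.map_apply]
        push_cast
        ring
      rw [hdet]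
      have hz2 : z ^ 2 = -(D : ℂ) := by
        rw [hzdef]
        have : ((Real.sqrt D : ℝ) : ℂ) ^ 2 = (D : ℂ) := by
          rw [← Complex.ofReal_pow, Real.sq_sqrt hDpos.le]
        rw [mul_pow, Complex.I_sq, this]
        ring
      rw [hz2]
      ring
    have := h z hz
    rw [hzdef] at this
    simp [Complex.mul_re] at this
end

section
/- For every real ε < 0, the 2×2 real matrix A_ε = [[ε, 1], [−1, −2]] is robustly D-stable: there exists μ > 0 such that for every 2×2 real matrix B with ‖B‖ ≤ μ, the matrix A_ε + B is D-stable. -/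
open Matrix

/-!
For a real 2×2 matrix, negative trace and positive determinant force both eigenvalues into the
open left half-plane. If `A` has negative diagonal and positive determinant, so does `D * A` for
every positive diagonal `D`, hence `A` is D-stable. The entries of `A_ε` have the sign pattern
`(-, +; -, -)`, which already gives `det > 0`; since every entry of `B` is bounded by `‖B‖`, a
perturbation smaller than the smallest `|A_ε i j|` keeps this sign pattern.
-/

theorem re_neg_of_sq_sub_mul_add_eq_zero {t d : ℝ} (ht : t < 0) (hd : 0 < d) {z : ℂ}
    (hz : z ^ 2 - t * z + d = 0) : z.re < 0 := by
  have hre := congrArg Complex.re hz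
  have him := congrArg Complex.im hz
  simp only [sq, Complex.add_re, Complex.sub_re, Complex.mul_re, Complex.ofReal_re,
    Complex.ofReal_im, Complex.add_im, Complex.sub_im, Complex.mul_im, Complex.zero_re,
    Complex.zero_im] at hre him
  have him₀ : z.im * (2 * z.re - t) = 0 := by linarith
  rcases mul_eq_zero.1 him₀ with hy | hre₀
  · by_contra! h
    rw [hy] at hre
    nlinarith
  · linarith

theorem isHurwitz_of_trace_neg_of_det_pos (M : Matrix (Fin 2) (Fin 2) ℝ)
    (ht : M.trace < 0) (hd : 0 < M.det) : IsHurwitz M := by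
  intro z hz
  rw [mem_spectrum_iff_isRoot_charpoly, charpoly_fin_two] at hz
  refine re_neg_of_sq_sub_mul_add_eq_zero ht hd ?_
  simpa [trace_fin_two, det_fin_two] using hz

theorem dStable_of_diag_neg_of_det_pos (A : Matrix (Fin 2) (Fin 2) ℝ)
    (h₀ : A 0 0 < 0) (h₁ : A 1 1 < 0) (hd : 0 < A.det) : DStable A := by
  intro d₁ d₂ hd₁ hd₂
  apply isHurwitz_of_trace_neg_of_det_pos
  · have := add_pos (mul_pos hd₁ (neg_pos.2 h₀)) (mul_pos hd₂ (neg_pos.2 h₁))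
    simp only [trace_fin_two, diagonal_mul, cons_val_zero, cons_val_one]
    linarith
  · rw [det_mul, det_diagonal, Fin.prod_univ_two]
    simp only [cons_val_zero, cons_val_one]
    exact mul_pos (mul_pos hd₁ hd₂) hd

theorem abs_apply_le_opNorm2 {m : Type*} [Fintype m] [DecidableEq m] (B : Matrix m m ℝ)
    (i j : m) : |B i j| ≤ opNorm2 B := by
  have h := (toEuclideanCLM (𝕜 := ℝ) B).le_opNorm (PiLp.single 2 j 1)
  rw [PiLp.norm_single, norm_one, mul_one, PiLp.single, toEuclideanCLM_toLp] at h
  simpa [opNorm2, mulVec_single] using (PiLp.norm_apply_le _ i).trans h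

theorem mul_add_pos_of_abs_lt {a b : ℝ} (h : |b| < |a|) : 0 < a * (a + b) := by
  have : |a * b| < a * a := by
    rw [abs_mul, ← abs_mul_abs_self a]
    exact mul_lt_mul_of_pos_left h ((abs_nonneg b).trans_lt h)
  nlinarith [neg_abs_le (a * b)]

def RobustlyDStable (A : Matrix (Fin 2) (Fin 2) ℝ) : Prop :=
  ∃ μ : ℝ, 0 < μ ∧ ∀ B : Matrix (Fin 2) (Fin 2) ℝ, opNorm2 B ≤ μ → DStable (A + B)

theorem robustlyDStable_of_diag_neg_of_offDiag_mul_neg (A : Matrix (Fin 2) (Fin 2) ℝ)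
    (h₀ : A 0 0 < 0) (h₁ : A 1 1 < 0) (h : A 0 1 * A 1 0 < 0) : RobustlyDStable A := by
  set m := min (min |A 0 0| |A 1 1|) (min |A 0 1| |A 1 0|)
  have hm : 0 < m := lt_min (lt_min (abs_pos.2 h₀.ne) (abs_pos.2 h₁.ne))
    (lt_min (abs_pos.2 (left_ne_zero_of_mul h.ne)) (abs_pos.2 (right_ne_zero_of_mul h.ne)))
  refine ⟨m / 2, half_pos hm, fun B hB => ?_⟩
  have sign_preserved : ∀ i j, m ≤ |A i j| → 0 < A i j * (A + B) i j := fun i j hij =>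
    mul_add_pos_of_abs_lt <| (abs_apply_le_opNorm2 B i j).trans_lt <|
      hB.trans_lt <| (half_lt_self hm).trans_le hij
  have p₀₀ := sign_preserved 0 0 ((min_le_left _ _).trans (min_le_left _ _))
  have p₁₁ := sign_preserved 1 1 ((min_le_left _ _).trans (min_le_right _ _))
  have p₀₁ := sign_preserved 0 1 ((min_le_right _ _).trans (min_le_left _ _))
  have p₁₀ := sign_preserved 1 0 ((min_le_right _ _).trans (min_le_right _ _))
  have hoff : (A + B) 0 1 * (A + B) 1 0 < 0 :=
    neg_of_mul_pos_right (by convert mul_pos p₀₁ p₁₀ using 1; ring) h.le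
  have d₀ : (A + B) 0 0 < 0 := neg_of_mul_pos_right p₀₀ h₀.le
  have d₁ : (A + B) 1 1 < 0 := neg_of_mul_pos_right p₁₁ h₁.le
  refine dStable_of_diag_neg_of_det_pos _ d₀ d₁ ?_
  rw [det_fin_two]
  linarith [mul_pos_of_neg_of_neg d₀ d₁]

theorem Aeps_robustly_D_stable (ε : ℝ) (hε : ε < 0) :
    ∃ μ : ℝ, 0 < μ ∧
      ∀ B : Matrix (Fin 2) (Fin 2) ℝ, opNorm2 B ≤ μ →
        DStable (!![ε, 1; -1, -2] + B) :=
  robustlyDStable_of_diag_neg_of_offDiag_mul_neg _ (by simpa using hε) (by simp) (by simp)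
end

section
/- Let A ∈ ℝ^{n×n} be Hurwitz, B ∈ ℝ^{n×m}, C ∈ ℝ^{p×n}, D ∈ ℝ^{p×m}, K ∈ ℝ^{m×p}, and define the DC gain G = −C A⁻¹ B + D. If −G K is Hurwitz, then there exists ε* > 0 such that for every ε ∈ (0, ε*), the (n+p)×(n+p) matrix [[A, B K], [−ε C, −ε D K]] is Hurwitz. -/
open Matrix Filter Topology

attribute [local instance] Matrix.linftyOpNormedAddCommGroup Matrix.linftyOpNormedSpace
  Matrix.linftyOpNormedRing Matrix.linftyOpNormedAlgebra

namespace LowGainAux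

lemma mem_spec_iff {k : Type*} [Fintype k] [DecidableEq k] (M : Matrix k k ℂ) (μ : ℂ) :
    μ ∈ spectrum ℂ M ↔ (μ • (1 : Matrix k k ℂ) - M).det = 0 := by
  rw [spectrum.mem_iff, Algebra.algebraMap_eq_smul_one, Matrix.isUnit_iff_isUnit_det,
    isUnit_iff_ne_zero, not_not]

lemma hurwitz_det_ne {k : Type*} [Fintype k] [DecidableEq k] {M : Matrix k k ℝ}
    (hM : IsHurwitz M) {μ : ℂ} (hμ : 0 ≤ μ.re) :
    (μ • (1 : Matrix k k ℂ) - M.map (algebraMap ℝ ℂ)).det ≠ 0 := fun h =>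
  absurd (hM μ ((mem_spec_iff _ _).2 h)) (not_lt.2 hμ)

/-- The key analytic lemma, stated purely over `ℂ`. -/
theorem aux {n p : ℕ} (A : Matrix (Fin n) (Fin n) ℂ) (B : Matrix (Fin n) (Fin p) ℂ)
    (C : Matrix (Fin p) (Fin n) ℂ) (D : Matrix (Fin p) (Fin p) ℂ)
    (hA : ∀ μ : ℂ, 0 ≤ μ.re → (μ • (1 : Matrix (Fin n) (Fin n) ℂ) - A).det ≠ 0)
    (hG : ∀ μ : ℂ, 0 ≤ μ.re →
      (μ • (1 : Matrix (Fin p) (Fin p) ℂ) + (-(C * A⁻¹ * B) + D)).det ≠ 0) :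
    ∃ εstar > 0, ∀ ε : ℝ, ε ∈ Set.Ioo 0 εstar → ∀ μ : ℂ, 0 ≤ μ.re →
      (μ • (1 : Matrix (Fin n ⊕ Fin p) (Fin n ⊕ Fin p) ℂ) -
        fromBlocks A B (-((ε : ℂ) • C)) (-((ε : ℂ) • D))).det ≠ 0 := by
  by_contra hcon
  push_neg at hcon
  have hseq : ∀ k : ℕ, ∃ ε : ℝ, ε ∈ Set.Ioo 0 (1 / ((k : ℝ) + 1)) ∧ ∃ μ : ℂ, 0 ≤ μ.re ∧
      (μ • (1 : Matrix (Fin n ⊕ Fin p) (Fin n ⊕ Fin p) ℂ) -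
        fromBlocks A B (-((ε : ℂ) • C)) (-((ε : ℂ) • D))).det = 0 := by
    intro k
    obtain ⟨ε, hε, μ, hre, hdet⟩ := hcon (1 / ((k : ℝ) + 1)) (by positivity)
    exact ⟨ε, hε, μ, hre, hdet⟩
  choose ε hεIoo μ hre hdet0 using hseq
  -- block decomposition of `μ • 1 - M(ε)`
  have hblk : ∀ (μ : ℂ) (e : ℂ),
      μ • (1 : Matrix (Fin n ⊕ Fin p) (Fin n ⊕ Fin p) ℂ) -
        fromBlocks A B (-(e • C)) (-(e • D)) =
      fromBlocks (μ • 1 - A) (-B) (e • C) (μ • 1 + e • D) := by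
    intro μ e
    rw [← fromBlocks_one, fromBlocks_smul]
    ext (i | i) (j | j) <;>
      simp [fromBlocks, sub_eq_add_neg]
  -- the transfer function
  set Hf : ℂ → Matrix (Fin p) (Fin p) ℂ :=
    fun s => C * (s • 1 - A)⁻¹ * B + D with hHf
  -- Schur complement step
  have hfac : ∀ k, ((μ k / (ε k : ℂ)) • (1 : Matrix (Fin p) (Fin p) ℂ) + Hf (μ k)).det = 0 := by
    intro k
    have hdetA : IsUnit (μ k • (1 : Matrix (Fin n) (Fin n) ℂ) - A).det :=
      isUnit_iff_ne_zero.2 (hA _ (hre k))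
    haveI := (μ k • (1 : Matrix (Fin n) (Fin n) ℂ) - A).invertibleOfIsUnitDet hdetA
    have h := hdet0 k
    rw [hblk, det_fromBlocks₁₁, Matrix.invOf_eq_nonsing_inv] at h
    have h2 : ((μ k • 1 + (ε k : ℂ) • D) -
        ((ε k : ℂ) • C) * (μ k • 1 - A)⁻¹ * (-B)).det = 0 := by
      rcases mul_eq_zero.1 h with h' | h'
      · exact absurd h' (hA _ (hre k))
      · exact h'
    have hS : (μ k • 1 + (ε k : ℂ) • D) - ((ε k : ℂ) • C) * (μ k • 1 - A)⁻¹ * (-B) =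
        μ k • 1 + (ε k : ℂ) • Hf (μ k) := by
      simp only [hHf, Matrix.mul_neg, sub_neg_eq_add, Matrix.smul_mul, smul_add]
      abel
    rw [hS] at h2
    have hε0 : (ε k : ℂ) ≠ 0 := Complex.ofReal_ne_zero.2 (ne_of_gt (hεIoo k).1)
    have h3 : μ k • (1 : Matrix (Fin p) (Fin p) ℂ) + (ε k : ℂ) • Hf (μ k) =
        (ε k : ℂ) • ((μ k / (ε k : ℂ)) • 1 + Hf (μ k)) := by
      conv_rhs => rw [smul_add, smul_smul, mul_comm, div_mul_cancel₀ _ hε0]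
    rw [h3, det_smul] at h2
    rcases mul_eq_zero.1 h2 with h' | h'
    · exact absurd h' (pow_ne_zero _ hε0)
    · exact h'
  rcases isEmpty_or_nonempty (Fin p) with hp | hp
  · have := hfac 0
    rw [Matrix.det_isEmpty] at this
    exact one_ne_zero this
  haveI : Nonempty (Fin n ⊕ Fin p) := ⟨Sum.inr hp.some⟩
  -- boundedness of the eigenvalues
  set Mb : Matrix (Fin n ⊕ Fin p) (Fin n ⊕ Fin p) ℂ := fromBlocks A B 0 0 with hMb
  set N1 : Matrix (Fin n ⊕ Fin p) (Fin n ⊕ Fin p) ℂ := fromBlocks 0 0 (-C) (-D) with hN1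
  have hMε : ∀ e : ℂ, fromBlocks A B (-(e • C)) (-(e • D)) = Mb + e • N1 := by
    intro e
    rw [hMb, hN1, fromBlocks_smul, fromBlocks_add]
    simp [smul_neg]
  have hε1 : ∀ k, |ε k| ≤ 1 := by
    intro k
    rw [abs_of_pos (hεIoo k).1]
    have h2 := (hεIoo k).2
    have : (1 : ℝ) / (k + 1) ≤ 1 := by
      rw [div_le_one (by positivity)]
      linarith [Nat.cast_nonneg (α := ℝ) k]
    linarith
  have hbound : ∀ k, μ k ∈ Metric.closedBall (0 : ℂ) (‖Mb‖ + ‖N1‖) := by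
    intro k
    rw [Metric.mem_closedBall, dist_zero_right]
    have hmem : μ k ∈ spectrum ℂ (Mb + (ε k : ℂ) • N1) := by
      rw [mem_spec_iff, ← hMε]
      exact hdet0 k
    calc ‖μ k‖ ≤ ‖Mb + (ε k : ℂ) • N1‖ := spectrum.norm_le_norm_of_mem hmem
      _ ≤ ‖Mb‖ + ‖(ε k : ℂ) • N1‖ := norm_add_le _ _
      _ ≤ ‖Mb‖ + ‖N1‖ := by
          rw [norm_smul]
          have : ‖(ε k : ℂ)‖ ≤ 1 := by
            rw [Complex.norm_real, Real.norm_eq_abs]; exact hε1 k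
          nlinarith [norm_nonneg N1]
  obtain ⟨μL, -, ψ, hψmono, hψtend⟩ :=
    (isCompact_closedBall (0 : ℂ) (‖Mb‖ + ‖N1‖)).tendsto_subseq hbound
  -- ε (ψ k) → 0
  have hepsψ : Tendsto (fun k => ε (ψ k)) atTop (𝓝 0) := by
    apply squeeze_zero (g := fun k : ℕ => 1 / ((k : ℝ) + 1))
      (fun k => le_of_lt (hεIoo (ψ k)).1) ?_ tendsto_one_div_add_atTop_nhds_zero_nat
    intro k
    have h2 := (hεIoo (ψ k)).2
    have hψk : (k : ℝ) ≤ (ψ k : ℝ) := Nat.cast_le.2 hψmono.le_apply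
    have hle : (1 : ℝ) / ((ψ k : ℝ) + 1) ≤ 1 / ((k : ℝ) + 1) :=
      one_div_le_one_div_of_le (by positivity) (by linarith)
    linarith
  have hreL : 0 ≤ μL.re :=
    ge_of_tendsto' ((Complex.continuous_re.tendsto μL).comp hψtend) (fun k => hre (ψ k))
  -- the limit μL is an eigenvalue of M(0), hence μL = 0
  have hdetL : (μL • (1 : Matrix (Fin n ⊕ Fin p) (Fin n ⊕ Fin p) ℂ) - Mb).det = 0 := by
    have hcontF : Continuous (fun q : ℂ × ℝ =>
        (q.1 • (1 : Matrix (Fin n ⊕ Fin p) (Fin n ⊕ Fin p) ℂ) - (Mb + (q.2 : ℂ) • N1)).det) := by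
      apply Continuous.matrix_det
      exact ((continuous_fst.smul continuous_const).sub
        (continuous_const.add ((Complex.continuous_ofReal.comp continuous_snd).smul
          continuous_const)))
    have htend : Tendsto (fun k => (μ (ψ k), ε (ψ k))) atTop (𝓝 (μL, 0)) :=
      hψtend.prodMk_nhds hepsψ
    have := (hcontF.continuousAt.tendsto.comp htend)
    have heq : ∀ k, (μ (ψ k) • (1 : Matrix (Fin n ⊕ Fin p) (Fin n ⊕ Fin p) ℂ) -
        (Mb + ((ε (ψ k) : ℝ) : ℂ) • N1)).det = 0 := by
      intro k
      rw [← hMε]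
      exact hdet0 (ψ k)
    have h0 := tendsto_nhds_unique (this.congr (fun k => heq k)) tendsto_const_nhds
    simpa using h0
  have hμL : μL = 0 := by
    have h1 : (μL • (1 : Matrix (Fin n ⊕ Fin p) (Fin n ⊕ Fin p) ℂ) - Mb) =
        fromBlocks (μL • 1 - A) (-B) 0 (μL • 1) := by
      rw [hMb]
      simpa using hblk μL 0
    rw [h1, det_fromBlocks_zero₂₁] at hdetL
    rcases mul_eq_zero.1 hdetL with h' | h'
    · exact absurd h' (hA _ hreL)
    · rw [det_smul, det_one, mul_one] at h'
      exact (pow_eq_zero_iff Fintype.card_ne_zero).1 h'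
  rw [hμL] at hψtend
  -- continuity of Hf at 0
  have hdetA0 : IsUnit ((0 : ℂ) • (1 : Matrix (Fin n) (Fin n) ℂ) - A).det :=
    isUnit_iff_ne_zero.2 (hA 0 le_rfl)
  have hinvCA : ContinuousAt (fun s : ℂ => (s • (1 : Matrix (Fin n) (Fin n) ℂ) - A)⁻¹) 0 := by
    have hlin : Continuous (fun s : ℂ => s • (1 : Matrix (Fin n) (Fin n) ℂ) - A) :=
      (continuous_id.smul continuous_const).sub continuous_const
    have h2 : ContinuousAt (fun M : Matrix (Fin n) (Fin n) ℂ => M⁻¹)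
        ((fun s : ℂ => s • (1 : Matrix (Fin n) (Fin n) ℂ) - A) 0) := by
      apply continuousAt_matrix_inv
      rw [Ring.inverse_eq_inv']
      exact continuousAt_inv₀ hdetA0.ne_zero
    exact ContinuousAt.comp (x := (0 : ℂ))
      (f := fun s : ℂ => s • (1 : Matrix (Fin n) (Fin n) ℂ) - A) h2 hlin.continuousAt
  have hHcont : ContinuousAt Hf 0 := by
    have houter : Continuous (fun M : Matrix (Fin n) (Fin n) ℂ => C * M * B + D) :=
      ((continuous_const.matrix_mul continuous_id).matrix_mul continuous_const).add
        continuous_const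
    exact houter.continuousAt.comp hinvCA
  have hHtend : Tendsto (fun k => Hf (μ (ψ k))) atTop (𝓝 (Hf 0)) :=
    hHcont.tendsto.comp hψtend
  -- the slow eigenvalues ν
  set ν : ℕ → ℂ := fun k => μ (ψ k) / (ε (ψ k) : ℂ) with hν
  have hνspec : ∀ k, ν k ∈ spectrum ℂ (-(Hf (μ (ψ k)))) := by
    intro k
    rw [mem_spec_iff, sub_neg_eq_add]
    exact hfac (ψ k)
  have hνnorm : ∀ k, ‖ν k‖ ≤ ‖Hf (μ (ψ k))‖ := by
    intro k
    have := spectrum.norm_le_norm_of_mem (hνspec k)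
    rwa [norm_neg] at this
  obtain ⟨R2, hR2⟩ : BddAbove (Set.range fun k => ‖Hf (μ (ψ k))‖) :=
    ((continuous_norm.tendsto _).comp hHtend).bddAbove_range
  have hνball : ∀ k, ν k ∈ Metric.closedBall (0 : ℂ) R2 := by
    intro k
    rw [Metric.mem_closedBall, dist_zero_right]
    exact le_trans (hνnorm k) (hR2 ⟨k, rfl⟩)
  obtain ⟨νL, -, ρ, hρmono, hνtend⟩ :=
    (isCompact_closedBall (0 : ℂ) R2).tendsto_subseq hνball
  have hνLre : 0 ≤ νL.re := by
    apply ge_of_tendsto' ((Complex.continuous_re.tendsto νL).comp hνtend)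
    intro k
    show 0 ≤ (ν (ρ k)).re
    rw [hν]
    simp only [Complex.div_ofReal_re]
    exact div_nonneg (hre _) (le_of_lt (hεIoo _).1)
  -- pass to the limit in the Schur determinant
  have hdetν : (νL • (1 : Matrix (Fin p) (Fin p) ℂ) + Hf 0).det = 0 := by
    have hcontG : Continuous (fun q : ℂ × Matrix (Fin p) (Fin p) ℂ =>
        (q.1 • (1 : Matrix (Fin p) (Fin p) ℂ) + q.2).det) :=
      Continuous.matrix_det ((continuous_fst.smul continuous_const).add continuous_snd)
    have htend : Tendsto (fun k => (ν (ρ k), Hf (μ (ψ (ρ k))))) atTop (𝓝 (νL, Hf 0)) :=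
      hνtend.prodMk_nhds (hHtend.comp hρmono.tendsto_atTop)
    have := hcontG.continuousAt.tendsto.comp htend
    have heq : ∀ k, ((ν (ρ k)) • (1 : Matrix (Fin p) (Fin p) ℂ) + Hf (μ (ψ (ρ k)))).det = 0 :=
      fun k => hfac (ψ (ρ k))
    exact tendsto_nhds_unique (this.congr (fun k => heq k)) tendsto_const_nhds
  -- identify Hf 0 with the DC gain
  have hdetA' : IsUnit A.det := by
    rw [isUnit_iff_ne_zero]
    intro h0
    apply hA 0 le_rfl
    have h1 : ((0 : ℂ) • (1 : Matrix (Fin n) (Fin n) ℂ) - A) = -A := by simp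
    rw [h1, det_neg, h0, mul_zero]
  have hnegInv : (-A)⁻¹ = -(A⁻¹) := by
    apply Matrix.inv_eq_right_inv
    rw [neg_mul_neg, mul_nonsing_inv _ hdetA']
  have hHf0 : Hf 0 = -(C * A⁻¹ * B) + D := by
    rw [hHf]
    simp only [zero_smul, zero_sub, hnegInv, Matrix.mul_neg, Matrix.neg_mul]
  rw [hHf0] at hdetν
  exact hG νL hνLre hdetν

end LowGainAux

theorem lowgain_integral_control_stability
    (n m p : ℕ)
    (A : Matrix (Fin n) (Fin n) ℝ) (hA : IsHurwitz A)
    (B : Matrix (Fin n) (Fin m) ℝ) (C : Matrix (Fin p) (Fin n) ℝ)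
    (D : Matrix (Fin p) (Fin m) ℝ) (K : Matrix (Fin m) (Fin p) ℝ)
    (hGK : IsHurwitz (-(-(C * A⁻¹ * B) + D) * K)) :
    ∃ εstar > 0, ∀ ε : ℝ, ε ∈ Set.Ioo 0 εstar →
      IsHurwitz (Matrix.fromBlocks A (B * K) (-(ε • C)) (-(ε • (D * K)))) := by
  classical
  set φ := algebraMap ℝ ℂ with hφ
  set Ac := A.map φ with hAc
  set Bc := B.map φ with hBc
  set Cc := C.map φ with hCc
  set Dc := D.map φ with hDc
  set Kc := K.map φ with hKc
  have map_neg' : ∀ {a b : ℕ} (M : Matrix (Fin a) (Fin b) ℝ), (-M).map φ = -(M.map φ) := by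
    intro a b M; ext i j; simp [Matrix.map_apply]
  have map_add' : ∀ {a b : ℕ} (M N : Matrix (Fin a) (Fin b) ℝ),
      (M + N).map φ = M.map φ + N.map φ := by
    intro a b M N; ext i j; simp [Matrix.map_apply]
  have map_smul' : ∀ {a b : ℕ} (r : ℝ) (M : Matrix (Fin a) (Fin b) ℝ),
      (r • M).map φ = (r : ℂ) • M.map φ := by
    intro a b r M; ext i j; simp [Matrix.map_apply, hφ]
  -- A hypotheses
  have hA' : ∀ μ : ℂ, 0 ≤ μ.re → (μ • (1 : Matrix (Fin n) (Fin n) ℂ) - Ac).det ≠ 0 :=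
    fun μ hμ => LowGainAux.hurwitz_det_ne hA hμ
  have hdetA0 : ((0 : ℂ) • (1 : Matrix (Fin n) (Fin n) ℂ) - Ac).det ≠ 0 := hA' 0 le_rfl
  have hdetAc : Ac.det ≠ 0 := by
    intro h0
    apply hdetA0
    have : ((0 : ℂ) • (1 : Matrix (Fin n) (Fin n) ℂ) - Ac) = -Ac := by simp
    rw [this, det_neg, h0, mul_zero]
  have hACdet : Ac.det = φ A.det := (RingHom.map_det φ A).symm
  have hdetA : A.det ≠ 0 := by
    intro h0
    exact hdetAc (by rw [hACdet, h0, map_zero])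
  have hinvmap : (A⁻¹).map φ = Ac⁻¹ := by
    symm
    apply Matrix.inv_eq_right_inv
    rw [hAc, ← Matrix.map_mul, Matrix.mul_nonsing_inv _ (isUnit_iff_ne_zero.2 hdetA),
      Matrix.map_one _ (map_zero φ) (map_one φ)]
  -- G hypothesis
  have hG' : ∀ μ : ℂ, 0 ≤ μ.re →
      (μ • (1 : Matrix (Fin p) (Fin p) ℂ) + (-(Cc * Ac⁻¹ * (Bc * Kc)) + Dc * Kc)).det ≠ 0 := by
    intro μ hμ
    have h := LowGainAux.hurwitz_det_ne hGK hμ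
    have hX : ((-(-(C * A⁻¹ * B) + D) * K)).map φ = -((-(Cc * Ac⁻¹ * Bc) + Dc) * Kc) := by
      rw [Matrix.map_mul, map_neg', map_add', map_neg', Matrix.map_mul, Matrix.map_mul, hinvmap,
        Matrix.neg_mul]
    rw [hX] at h
    have harr : μ • (1 : Matrix (Fin p) (Fin p) ℂ) - -((-(Cc * Ac⁻¹ * Bc) + Dc) * Kc) =
        μ • (1 : Matrix (Fin p) (Fin p) ℂ) + (-(Cc * Ac⁻¹ * (Bc * Kc)) + Dc * Kc) := by
      rw [sub_neg_eq_add, Matrix.add_mul, Matrix.neg_mul, Matrix.mul_assoc]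
    rwa [harr] at h
  obtain ⟨εstar, hεstar, hmain⟩ := LowGainAux.aux Ac (Bc * Kc) Cc (Dc * Kc) hA' hG'
  refine ⟨εstar, hεstar, fun ε hε => ?_⟩
  intro μ hμspec
  by_contra hrelt
  push_neg at hrelt
  apply hmain ε hε μ hrelt
  rw [LowGainAux.mem_spec_iff] at hμspec
  have hmap : (fromBlocks A (B * K) (-(ε • C)) (-(ε • (D * K)))).map φ =
      fromBlocks Ac (Bc * Kc) (-((ε : ℂ) • Cc)) (-((ε : ℂ) • (Dc * Kc))) := by
    rw [fromBlocks_map, Matrix.map_mul, map_neg', map_smul', map_neg', map_smul',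
      Matrix.map_mul]
  rwa [hmap] at hμspec
end
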